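/- arXiv:2107.03517 — 10 statements merged into one kernel-verified Lean document; each statement's English description precedes it below -/
import Mathlib

section
/- (Theorem 2, part (ii), final bang.) Let B, C be Hermitian n×n matrices, H(v) := vB + (1−v)C, and t_f > 0. Let ρ, p : [0,t_f] → (Hermitian n×n matrices) be continuous, let s : [0,t_f] → [0,1], and suppose: (a) p(t_f) = −C; (b) there is a real constant λ > 0 with Re Tr(p(t)·(−i)[H(s(t)), ρ(t)]) = λ for every t ∈ [0,t_f]; and (c) for every t ∈ [0,t_f] and every v ∈ [0,1], Re Tr(p(t)·(−i)[H(v), ρ(t)]) ≤ λ. Then there exists ε > 0 such that s(t) = 1 for all t ∈ (t_f − ε, t_f]. -/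
/-!
The PMP Hamiltonian `Re Tr(p K_{H(v)} ρ)` is affine in `v` with slope the switching function
`F = Re Tr(p K_B ρ) − Re Tr(p K_C ρ)`. At `t_f` we have `p = −C` and `Tr(C [C, ρ]) = 0`, so the
Hamiltonian there equals `s(t_f) F(t_f) = λ > 0`, forcing `F(t_f) > 0`. By continuity `F > 0` on a
final interval, and there maximality of `s(t)` over `[0, 1]` forces `s(t) = 1`.
-/

open Matrix Filter Topology

noncomputable section

namespace Stmt2

variable {n : ℕ}

/-- The superoperator `K_X(ρ) = −i[X, ρ]`. -/
def K (X ρ : Matrix (Fin n) (Fin n) ℂ) : Matrix (Fin n) (Fin n) ℂ :=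
  (-Complex.I) • (X * ρ - ρ * X)

/-- The control Hamiltonian `H(v) = vB + (1−v)C`. -/
def Ham (B C : Matrix (Fin n) (Fin n) ℂ) (v : ℝ) : Matrix (Fin n) (Fin n) ℂ :=
  (v : ℂ) • B + (1 - (v : ℂ)) • C

section

variable (B C X p ρ : Matrix (Fin n) (Fin n) ℂ)

lemma trace_mul_K_Ham (v : ℝ) :
    trace (p * K (Ham B C v) ρ) =
      (v : ℂ) * trace (p * K B ρ) + (1 - (v : ℂ)) * trace (p * K C ρ) := by
  simp only [K, Ham, Matrix.smul_mul, Matrix.mul_smul, mul_sub, sub_mul, mul_add, add_mul,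
    trace_add, trace_sub, trace_smul, smul_eq_mul]
  ring

lemma re_trace_mul_K_Ham (v : ℝ) :
    (trace (p * K (Ham B C v) ρ)).re =
      (trace (p * K C ρ)).re + v * ((trace (p * K B ρ)).re - (trace (p * K C ρ)).re) := by
  rw [trace_mul_K_Ham]
  simp only [Complex.add_re, Complex.mul_re, Complex.sub_re, Complex.sub_im,
    Complex.ofReal_re, Complex.ofReal_im, Complex.one_re, Complex.one_im]
  ring

lemma trace_mul_K_self : trace (X * K X ρ) = 0 := by
  rw [K, Matrix.mul_smul, trace_smul, mul_sub, trace_sub, ← Matrix.mul_assoc, ← Matrix.mul_assoc,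
    trace_mul_cycle X ρ X, sub_self, smul_zero]

lemma _root_.ContinuousOn.re_trace_mul_K {S : Set ℝ} {p ρ : ℝ → Matrix (Fin n) (Fin n) ℂ}
    (hp : ContinuousOn p S) (hρ : ContinuousOn ρ S) :
    ContinuousOn (fun t => (trace (p t * K X (ρ t))).re) S := by
  unfold K
  fun_prop

variable {B C p ρ} {s lam : ℝ}

lemma switching_pos_of_terminal (hs : 0 ≤ s) (hlam : 0 < lam)
    (h : (trace (-C * K (Ham B C s) ρ)).re = lam) :
    0 < (trace (-C * K B ρ)).re - (trace (-C * K C ρ)).re := by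
  have hC : (trace (-C * K C ρ)).re = 0 := by
    rw [Matrix.neg_mul, trace_neg, trace_mul_K_self, neg_zero, Complex.zero_re]
  rw [re_trace_mul_K_Ham, hC, zero_add] at h
  rw [hC]
  exact pos_of_mul_pos_right (h ▸ hlam) hs

lemma eq_one_of_switching_pos (hF : 0 < (trace (p * K B ρ)).re - (trace (p * K C ρ)).re)
    (hs : s ≤ 1) (hlam : (trace (p * K (Ham B C s) ρ)).re = lam)
    (hmax : (trace (p * K (Ham B C 1) ρ)).re ≤ lam) : s = 1 := by
  rw [re_trace_mul_K_Ham] at hlam hmax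
  exact le_antisymm hs (le_of_mul_le_mul_right (by linarith) hF)

end

theorem final_bang_general
    (B C : Matrix (Fin n) (Fin n) ℂ)
    (tf : ℝ) (htf : 0 < tf)
    (ρ p : ℝ → Matrix (Fin n) (Fin n) ℂ) (s : ℝ → ℝ)
    (hρcont : ContinuousOn ρ (Set.Icc 0 tf)) (hpcont : ContinuousOn p (Set.Icc 0 tf))
    (hsval : ∀ t ∈ Set.Icc (0 : ℝ) tf, s t ∈ Set.Icc (0 : ℝ) 1)
    -- (a) terminal condition
    (hptf : p tf = -C)
    -- (b) the PMP control Hamiltonian is constant and equal to `λ > 0`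
    (lam : ℝ) (hlam : 0 < lam)
    (hconst : ∀ t ∈ Set.Icc (0 : ℝ) tf,
      (Matrix.trace (p t * K (Ham B C (s t)) (ρ t))).re = lam)
    -- (c) the maximum condition
    (hmax : ∀ t ∈ Set.Icc (0 : ℝ) tf, ∀ v ∈ Set.Icc (0 : ℝ) 1,
      (Matrix.trace (p t * K (Ham B C v) (ρ t))).re ≤ lam) :
    ∃ ε > 0, ∀ t ∈ Set.Ioc (tf - ε) tf, s t = 1 := by
  set F : ℝ → ℝ := fun t => (trace (p t * K B (ρ t))).re - (trace (p t * K C (ρ t))).re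
  have htf_mem : tf ∈ Set.Icc 0 tf := ⟨htf.le, le_rfl⟩
  have hF_tf : 0 < F tf := by
    have h := hconst tf htf_mem
    simp only [F, hptf] at h ⊢
    exact switching_pos_of_terminal (hsval tf htf_mem).1 hlam h
  have hF_cont : ContinuousWithinAt F (Set.Icc 0 tf) tf :=
    ((hpcont.re_trace_mul_K B hρcont).sub (hpcont.re_trace_mul_K C hρcont)) tf htf_mem
  have hev : ∀ᶠ t in 𝓝[≤] tf, t ∈ Set.Icc 0 tf ∧ 0 < F t := by
    rw [← nhdsWithin_Icc_eq_nhdsLE htf]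
    exact eventually_mem_nhdsWithin.and (hF_cont.eventually_const_lt hF_tf)
  obtain ⟨l, hl, hsub⟩ := mem_nhdsLE_iff_exists_Ioc_subset.mp hev
  refine ⟨tf - l, sub_pos.mpr hl, fun t ht => ?_⟩
  rw [sub_sub_cancel] at ht
  obtain ⟨ht_mem, hF_t⟩ := hsub ht
  exact eq_one_of_switching_pos hF_t (hsval t ht_mem).2 (hconst t ht_mem)
    (hmax t ht_mem 1 ⟨zero_le_one, le_rfl⟩)

/-- **Theorem 2, part (ii), final bang**: under the PMP conditions with an active final-time
constraint (`λ > 0`) and terminal co-state `p(tf) = −C`, the control is `s ≡ 1` on a final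
interval `(tf − ε, tf]`. -/
theorem final_bang
    (B C : Matrix (Fin n) (Fin n) ℂ) (hB : B.IsHermitian) (hC : C.IsHermitian)
    (tf : ℝ) (htf : 0 < tf)
    (ρ p : ℝ → Matrix (Fin n) (Fin n) ℂ) (s : ℝ → ℝ)
    (hρcont : ContinuousOn ρ (Set.Icc 0 tf)) (hpcont : ContinuousOn p (Set.Icc 0 tf))
    (hρHerm : ∀ t ∈ Set.Icc (0 : ℝ) tf, (ρ t).IsHermitian)
    (hpHerm : ∀ t ∈ Set.Icc (0 : ℝ) tf, (p t).IsHermitian)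
    (hsval : ∀ t ∈ Set.Icc (0 : ℝ) tf, s t ∈ Set.Icc (0 : ℝ) 1)
    -- (a) terminal condition
    (hptf : p tf = -C)
    -- (b) the PMP control Hamiltonian is constant and equal to `λ > 0`
    (lam : ℝ) (hlam : 0 < lam)
    (hconst : ∀ t ∈ Set.Icc (0 : ℝ) tf,
      (Matrix.trace (p t * K (Ham B C (s t)) (ρ t))).re = lam)
    -- (c) the maximum condition
    (hmax : ∀ t ∈ Set.Icc (0 : ℝ) tf, ∀ v ∈ Set.Icc (0 : ℝ) 1,
      (Matrix.trace (p t * K (Ham B C v) (ρ t))).re ≤ lam) :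
    ∃ ε > 0, ∀ t ∈ Set.Ioc (tf - ε) tf, s t = 1 :=
  final_bang_general B C tf htf ρ p s hρcont hpcont hsval hptf lam hlam hconst hmax

end Stmt2
end
end

section
/- (Theorem 2, part (ii), initial bang.) Let B, C be Hermitian n×n matrices, H(v) := vB + (1−v)C, and t_f > 0. Let ρ, p : [0,t_f] → (Hermitian n×n matrices) be continuous, let s : [0,t_f] → [0,1], and suppose: (a) [B, ρ(0)] = 0; (b) there is a real constant λ > 0 with Re Tr(p(t)·(−i)[H(s(t)), ρ(t)]) = λ for every t ∈ [0,t_f]; and (c) for every t ∈ [0,t_f] and every v ∈ [0,1], Re Tr(p(t)·(−i)[H(v), ρ(t)]) ≤ λ. Then there exists ε' > 0 such that s(t) = 0 for all t ∈ [0, ε'). -/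
/-!
Write `g t = Re Tr(p K_B ρ)` and `h t = Re Tr(p K_C ρ)`, so that the PMP Hamiltonian at
control `v` is `v g + (1 - v) h`. The maximum condition at `v = 0` gives `h ≤ λ`, and together
with `s g + (1 - s) h = λ` this forces `s (h - g) = h - λ ≤ 0`. Since `[B, ρ(0)] = 0` we have
`g 0 = 0`, and `λ > 0` then forces `h 0 > 0 = g 0`. By continuity `h > g` on an initial
interval, where `s (h - g) ≤ 0` and `s ≥ 0` give `s = 0`.
-/

open MeasureTheory Matrix

open Filter Topology

noncomputable section

namespace Stmt3

variable {n : ℕ}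

/-- The superoperator `K_X(ρ) = −i[X, ρ]`. -/
def K (X ρ : Matrix (Fin n) (Fin n) ℂ) : Matrix (Fin n) (Fin n) ℂ :=
  (-Complex.I) • (X * ρ - ρ * X)

/-- The control Hamiltonian `H(v) = vB + (1−v)C`. -/
def Ham (B C : Matrix (Fin n) (Fin n) ℂ) (v : ℝ) : Matrix (Fin n) (Fin n) ℂ :=
  (v : ℂ) • B + (1 - (v : ℂ)) • C

lemma K_eq_zero_of_commute {X ρ : Matrix (Fin n) (Fin n) ℂ} (h : X * ρ = ρ * X) :
    K X ρ = 0 := by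
  simp [K, h]

lemma K_Ham (B C ρ : Matrix (Fin n) (Fin n) ℂ) (v : ℝ) :
    K (Ham B C v) ρ = (v : ℂ) • K B ρ + (1 - (v : ℂ)) • K C ρ := by
  simp only [K, Ham, add_mul, mul_add, smul_mul_assoc, mul_smul_comm, smul_sub, smul_add,
    smul_comm (-Complex.I)]
  abel

lemma re_trace_mul_K_Ham (B C P ρ : Matrix (Fin n) (Fin n) ℂ) (v : ℝ) :
    (trace (P * K (Ham B C v) ρ)).re
      = v * (trace (P * K B ρ)).re + (1 - v) * (trace (P * K C ρ)).re := by
  rw [K_Ham, mul_add, mul_smul_comm, mul_smul_comm, trace_add, trace_smul, trace_smul,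
    smul_eq_mul, smul_eq_mul, Complex.add_re, Complex.re_ofReal_mul, ← Complex.ofReal_one,
    ← Complex.ofReal_sub, Complex.re_ofReal_mul]

lemma continuousOn_re_trace_mul_K {S : Set ℝ} {p ρ : ℝ → Matrix (Fin n) (Fin n) ℂ}
    (hp : ContinuousOn p S) (hρ : ContinuousOn ρ S) (X : Matrix (Fin n) (Fin n) ℂ) :
    ContinuousOn (fun t => (trace (p t * K X (ρ t))).re) S := by
  unfold K
  fun_prop

lemma exists_Ico_pos_of_continuousOn_Icc {f : ℝ → ℝ} {a b : ℝ} (hab : a < b)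
    (hf : ContinuousOn f (Set.Icc a b)) (ha : 0 < f a) :
    ∃ u > a, ∀ t ∈ Set.Ico a u, t ∈ Set.Icc a b ∧ 0 < f t := by
  have hev : ∀ᶠ t in 𝓝[Set.Icc a b] a, t ∈ Set.Icc a b ∧ 0 < f t :=
    Eventually.and self_mem_nhdsWithin <|
      (hf a (Set.left_mem_Icc.2 hab.le)).eventually (eventually_gt_nhds ha)
  rw [nhdsWithin_Icc_eq_nhdsGE hab] at hev
  exact mem_nhdsGE_iff_exists_Ico_subset.1 hev

lemma eq_zero_of_convex_combination_eq_of_lt {s g h lam : ℝ} (hs : 0 ≤ s)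
    (hcomb : s * g + (1 - s) * h = lam) (hmax : h ≤ lam) (hgh : g < h) : s = 0 := by
  nlinarith

theorem initial_bang_general
    (B C : Matrix (Fin n) (Fin n) ℂ)
    (tf : ℝ) (htf : 0 < tf)
    (ρ p : ℝ → Matrix (Fin n) (Fin n) ℂ) (s : ℝ → ℝ)
    (hρcont : ContinuousOn ρ (Set.Icc 0 tf)) (hpcont : ContinuousOn p (Set.Icc 0 tf))
    (hsval : ∀ t ∈ Set.Icc (0 : ℝ) tf, s t ∈ Set.Icc (0 : ℝ) 1)
    -- (a) the initial state commutes with the driver Hamiltonian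
    (hcomm : B * ρ 0 = ρ 0 * B)
    -- (b) the PMP control Hamiltonian is constant and equal to `λ > 0`
    (lam : ℝ) (hlam : 0 < lam)
    (hconst : ∀ t ∈ Set.Icc (0 : ℝ) tf,
      (Matrix.trace (p t * K (Ham B C (s t)) (ρ t))).re = lam)
    -- (c) the maximum condition
    (hmax : ∀ t ∈ Set.Icc (0 : ℝ) tf, ∀ v ∈ Set.Icc (0 : ℝ) 1,
      (Matrix.trace (p t * K (Ham B C v) (ρ t))).re ≤ lam) :
    ∃ ε' > 0, ∀ t ∈ Set.Ico (0 : ℝ) ε', s t = 0 := by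
  set g : ℝ → ℝ := fun t => (trace (p t * K B (ρ t))).re
  set h : ℝ → ℝ := fun t => (trace (p t * K C (ρ t))).re
  have hcomb : ∀ t ∈ Set.Icc 0 tf, s t * g t + (1 - s t) * h t = lam := fun t ht => by
    rw [← hconst t ht, re_trace_mul_K_Ham]
  have hh_le : ∀ t ∈ Set.Icc 0 tf, h t ≤ lam := fun t ht => by
    simpa [re_trace_mul_K_Ham] using hmax t ht 0 ⟨le_rfl, zero_le_one⟩
  have h0 : (0 : ℝ) ∈ Set.Icc 0 tf := ⟨le_rfl, htf.le⟩
  have hg0 : g 0 = 0 := by simp [g, K_eq_zero_of_commute hcomm]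
  have hgh0 : g 0 < h 0 := by
    have hlam0 : (1 - s 0) * h 0 = lam := by simpa [hg0] using hcomb 0 h0
    rw [hg0]
    exact pos_of_mul_pos_right (hlam0 ▸ hlam) (sub_nonneg.2 (hsval 0 h0).2)
  have hcont : ContinuousOn (fun t => h t - g t) (Set.Icc 0 tf) :=
    (continuousOn_re_trace_mul_K hpcont hρcont C).sub
      (continuousOn_re_trace_mul_K hpcont hρcont B)
  obtain ⟨ε, hε, hgh⟩ := exists_Ico_pos_of_continuousOn_Icc htf hcont (sub_pos.2 hgh0)
  refine ⟨ε, hε, fun t ht => ?_⟩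
  obtain ⟨htI, hgt⟩ := hgh t ht
  exact eq_zero_of_convex_combination_eq_of_lt (hsval t htI).1 (hcomb t htI) (hh_le t htI)
    (sub_pos.1 hgt)

/-- **Theorem 2, part (ii), initial bang**: under the PMP conditions with an active final-time
constraint (`λ > 0`), if the initial state commutes with the driver `B` then the control is
`s ≡ 0` on an initial interval `[0, ε')`. -/
theorem initial_bang
    (B C : Matrix (Fin n) (Fin n) ℂ) (hB : B.IsHermitian) (hC : C.IsHermitian)
    (tf : ℝ) (htf : 0 < tf)
    (ρ p : ℝ → Matrix (Fin n) (Fin n) ℂ) (s : ℝ → ℝ)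
    (hρcont : ContinuousOn ρ (Set.Icc 0 tf)) (hpcont : ContinuousOn p (Set.Icc 0 tf))
    (hρHerm : ∀ t ∈ Set.Icc (0 : ℝ) tf, (ρ t).IsHermitian)
    (hpHerm : ∀ t ∈ Set.Icc (0 : ℝ) tf, (p t).IsHermitian)
    (hsval : ∀ t ∈ Set.Icc (0 : ℝ) tf, s t ∈ Set.Icc (0 : ℝ) 1)
    -- (a) the initial state commutes with the driver Hamiltonian
    (hcomm : B * ρ 0 = ρ 0 * B)
    -- (b) the PMP control Hamiltonian is constant and equal to `λ > 0`
    (lam : ℝ) (hlam : 0 < lam)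
    (hconst : ∀ t ∈ Set.Icc (0 : ℝ) tf,
      (Matrix.trace (p t * K (Ham B C (s t)) (ρ t))).re = lam)
    -- (c) the maximum condition
    (hmax : ∀ t ∈ Set.Icc (0 : ℝ) tf, ∀ v ∈ Set.Icc (0 : ℝ) 1,
      (Matrix.trace (p t * K (Ham B C v) (ρ t))).re ≤ lam) :
    ∃ ε' > 0, ∀ t ∈ Set.Ico (0 : ℝ) ε', s t = 0 :=
  initial_bang_general B C tf htf ρ p s hρcont hpcont hsval hcomm lam hlam hconst hmax

end Stmt3
end
end

section
/- (Proposition 2: nonnegativity of the PMP constant.) Let f : ℝ^N × ℝ^M → ℝ^N be continuously differentiable, let S ⊆ ℝ^M be compact, let φ : ℝ^N → ℝ be continuously differentiable, let x₀ ∈ ℝ^N and t_f > 0. Suppose (x*, s*) is an optimal pair: s* : [0,t_f] → S is measurable, x* is absolutely continuous with ẋ*(t) = f(x*(t), s*(t)) a.e. and x*(0) = x₀, and for every measurable s : [0,t_f] → S and every absolutely continuous x with ẋ(t) = f(x(t), s(t)) a.e. and x(0) = x₀ one has φ(x(t_f)) ≥ φ(x*(t_f)). Suppose p : [0,t_f]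 → ℝ^N is absolutely continuous with ṗ(t)ᵀ = −p(t)ᵀ (∂f/∂x)(x*(t), s*(t)) a.e., p(t_f) = −∇φ(x*(t_f)), and there is a real constant λ with p(t)ᵀ f(x*(t), s*(t)) = λ for almost every t. If there exists s₀ ∈ S with f(x₀, s₀) = 0, then λ ≥ 0. -/
/-!
Resting at the equilibrium `x₀` (control `s₀`) for a time `tf - t` and then following `x*` is
admissible and ends at `x*(t)`, so `t ↦ φ(x*(t))` is minimal on `[0, tf]` at `tf` and its left
derivative there is `≤ 0`. That derivative is `-λ`: since `x*` is Lipschitz near `tf`, to first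
order `φ(x*(t)) - φ(x*(tf)) = p(tf) ⬝ᵥ ∫ₜ^tf f(x*, s*)`, and `p(tf) ⬝ᵥ f(x*(τ), s*(τ)) → λ`
almost everywhere as `τ → tf⁻`, because `p` is continuous and `f` is bounded along the trajectory.
-/

open MeasureTheory Set Filter Topology

noncomputable section

namespace Stmt4

theorem abs_dotProduct_le {ι : Type*} [Fintype ι] (v w : ι → ℝ) :
    |v ⬝ᵥ w| ≤ Fintype.card ι * (‖v‖ * ‖w‖) := by
  calc |v ⬝ᵥ w| ≤ ∑ i, |v i| * |w i| := by
        simpa only [dotProduct, abs_mul] using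
          Finset.abs_sum_le_sum_abs (fun i => v i * w i) Finset.univ
    _ ≤ ∑ _i : ι, ‖v‖ * ‖w‖ := Finset.sum_le_sum fun i _ =>
        mul_le_mul (norm_le_pi_norm v i) (norm_le_pi_norm w i) (abs_nonneg _) (norm_nonneg _)
    _ = Fintype.card ι * (‖v‖ * ‖w‖) := by simp

theorem _root_.ContinuousLinearMap.apply_eq_dotProduct {ι : Type*} [Fintype ι] [DecidableEq ι]
    (D : (ι → ℝ) →L[ℝ] ℝ) (v : ι → ℝ) : D v = (fun i => D (Pi.single i 1)) ⬝ᵥ v := by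
  conv_lhs => rw [← Finset.univ_sum_single v]
  simp only [map_sum, dotProduct]
  refine Finset.sum_congr rfl fun i _ => ?_
  rw [mul_comm, ← smul_eq_mul, ← map_smul, ← Pi.single_smul, smul_eq_mul, mul_one]

theorem tendsto_dotProduct_of_eventually_eq {ι : Type*} [Fintype ι] {p g : ℝ → ι → ℝ}
    {l : Filter ℝ} {p₀ : ι → ℝ} {c C : ℝ} (hp : Tendsto p l (𝓝 p₀))
    (hg : ∀ᶠ τ in l, ‖g τ‖ ≤ C) (hH : ∀ᶠ τ in l, p τ ⬝ᵥ g τ = c) :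
    Tendsto (fun τ => p₀ ⬝ᵥ g τ) l (𝓝 c) := by
  rw [tendsto_iff_norm_sub_tendsto_zero] at hp ⊢
  have hlim : Tendsto (fun τ => Fintype.card ι * (‖p τ - p₀‖ * C)) l (𝓝 0) := by
    simpa using (hp.mul_const C).const_mul (Fintype.card ι : ℝ)
  refine squeeze_zero' (Eventually.of_forall fun _ => norm_nonneg _) ?_ hlim
  filter_upwards [hg, hH] with τ hgτ hHτ
  rw [← hHτ, ← sub_dotProduct, Real.norm_eq_abs, norm_sub_rev]
  exact (abs_dotProduct_le _ _).trans (by gcongr)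

theorem _root_.IsLocalMinOn.hasDerivWithinAt_Iic_nonpos {u : ℝ → ℝ} {a c : ℝ}
    (h : IsLocalMinOn u (Iic a) a) (hu : HasDerivWithinAt u c (Iic a) a) : c ≤ 0 := by
  have hcone : (-1 : ℝ) ∈ posTangentConeAt (Iic a) a :=
    mem_posTangentConeAt_of_segment_subset fun z hz => by
      have := segment_subset_uIcc _ _ hz
      rw [uIcc_of_ge (by linarith)] at this
      exact this.2
  simpa using h.hasFDerivWithinAt_nonneg hu.hasFDerivWithinAt hcone

theorem _root_.HasFDerivAt.hasDerivWithinAt_comp_of_isBigO {E F : Type*} [NormedAddCommGroup E]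
    [NormedSpace ℝ E] [NormedAddCommGroup F] [NormedSpace ℝ F] {φ : E → F} {D : E →L[ℝ] F}
    {x : ℝ → E} {s : Set ℝ} {t₀ : ℝ} {c : F} (hφ : HasFDerivAt φ D (x t₀))
    (hx : (fun t => x t - x t₀) =O[𝓝[s] t₀] fun t => t - t₀)
    (hDx : HasDerivWithinAt (fun t => D (x t)) c s t₀) :
    HasDerivWithinAt (fun t => φ (x t)) c s t₀ := by
  have hxt : Tendsto x (𝓝[s] t₀) (𝓝 (x t₀)) := by
    have h0 : Tendsto (fun t => t - t₀) (𝓝[s] t₀) (𝓝 0) :=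
      tendsto_sub_nhds_zero_iff.2 (tendsto_nhdsWithin_of_tendsto_nhds tendsto_id)
    exact tendsto_sub_nhds_zero_iff.1 (hx.trans_tendsto h0)
  have hrem := (hφ.isLittleO.comp_tendsto hxt).trans_isBigO hx
  refine .of_isLittleO ((hrem.add hDx.isLittleO).congr_left fun t => ?_)
  simp only [Function.comp_apply, map_sub]
  abel

section Primitive

variable {E : Type*} [NormedAddCommGroup E] [NormedSpace ℝ E]
  {g x : ℝ → E} {x0 : E} {T : ℝ}

theorem continuousOn_of_eq_add_integral (hg : IntervalIntegrable g volume 0 T)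
    (hx : ∀ t ∈ Icc 0 T, x t = x0 + ∫ τ in (0 : ℝ)..t, g τ) : ContinuousOn x (Icc 0 T) :=
  (continuousOn_const.add ((intervalIntegral.continuousOn_primitive_interval' hg
    left_mem_uIcc).mono Icc_subset_uIcc)).congr hx

theorem norm_sub_le_of_eq_add_integral {C : ℝ} (hg : IntervalIntegrable g volume 0 T)
    (hC : ∀ τ ∈ Icc 0 T, ‖g τ‖ ≤ C) (hx : ∀ t ∈ Icc 0 T, x t = x0 + ∫ τ in (0 : ℝ)..t, g τ)
    {s t : ℝ} (hs : s ∈ Icc 0 T) (ht : t ∈ Icc 0 T) : ‖x t - x s‖ ≤ C * |t - s| := by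
  have hg' : ∀ a ∈ Icc 0 T, IntervalIntegrable g volume 0 a := fun a ha =>
    hg.mono_set (uIcc_subset_uIcc left_mem_uIcc (Icc_subset_uIcc ha))
  rw [hx t ht, hx s hs, add_sub_add_left_eq_sub,
    intervalIntegral.integral_interval_sub_left (hg' t ht) (hg' s hs)]
  exact intervalIntegral.norm_integral_le_of_norm_le_const fun τ hτ =>
    hC τ (uIoc_subset_uIcc.trans (uIcc_subset_Icc hs ht) hτ)

theorem isBigO_sub_of_eq_add_integral {C : ℝ} (hT : 0 < T)
    (hg : IntervalIntegrable g volume 0 T)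
    (hC : ∀ τ ∈ Icc 0 T, ‖g τ‖ ≤ C) (hx : ∀ t ∈ Icc 0 T, x t = x0 + ∫ τ in (0 : ℝ)..t, g τ) :
    (fun t => x t - x T) =O[𝓝[≤] T] fun t => t - T := by
  refine Asymptotics.IsBigO.of_bound C ?_
  filter_upwards [Icc_mem_nhdsLE hT] with t ht
  rw [Real.norm_eq_abs]
  exact norm_sub_le_of_eq_add_integral hg hC hx ⟨hT.le, le_rfl⟩ ht

theorem hasDerivWithinAt_Iic_of_eq_add_integral [CompleteSpace E] {c : E} (hT : 0 < T)
    (hg : IntervalIntegrable g volume 0 T)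
    (hx : ∀ t ∈ Icc 0 T, x t = x0 + ∫ τ in (0 : ℝ)..t, g τ)
    (hlim : Tendsto g (𝓝[≤] T ⊓ ae volume) (𝓝 c)) : HasDerivWithinAt x c (Iic T) T := by
  have hmeas : StronglyMeasurableAtFilter g (𝓝[≤] T) :=
    ⟨Ioc 0 T, Ioc_mem_nhdsLE hT, hg.1.aestronglyMeasurable⟩
  refine ((intervalIntegral.integral_hasDerivWithinAt_of_tendsto_ae_right hg hmeas
    hlim).const_add x0).congr_of_eventuallyEq ?_ (hx T ⟨hT.le, le_rfl⟩)
  filter_upwards [Icc_mem_nhdsLE hT] with t ht using hx t ht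

theorem _root_.ContinuousLinearMap.comp_eq_add_integral [CompleteSpace E] {F : Type*}
    [NormedAddCommGroup F] [NormedSpace ℝ F] [CompleteSpace F] (L : E →L[ℝ] F)
    (hg : IntervalIntegrable g volume 0 T)
    (hx : ∀ t ∈ Icc 0 T, x t = x0 + ∫ τ in (0 : ℝ)..t, g τ) :
    ∀ t ∈ Icc 0 T, L (x t) = L x0 + ∫ τ in (0 : ℝ)..t, L (g τ) := fun t ht => by
  rw [hx t ht, map_add, ← L.intervalIntegral_comp_comm
    (hg.mono_set (uIcc_subset_uIcc left_mem_uIcc (Icc_subset_uIcc ht)))]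

end Primitive

def delay {α : Type*} (δ : ℝ) (a : α) (u : ℝ → α) (t : ℝ) : α :=
  if t ≤ δ then a else u (t - δ)

section Delay

variable {α β γ : Type*} {δ t : ℝ}

theorem delay_of_le {a : α} {u : ℝ → α} (ht : t ≤ δ) : delay δ a u t = a := if_pos ht

theorem delay_of_lt {a : α} {u : ℝ → α} (ht : δ < t) : delay δ a u t = u (t - δ) :=
  if_neg (not_le.2 ht)

theorem delay_apply₂ (F : α → β → γ) (a : α) (b : β) (u : ℝ → α) (v : ℝ → β) :
    F (delay δ a u t) (delay δ b v t) = delay δ (F a b) (fun τ => F (u τ) (v τ)) t := by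
  unfold delay
  split_ifs <;> rfl

theorem _root_.Measurable.delay [MeasurableSpace α] {u : ℝ → α} (hu : Measurable u) (a : α) :
    Measurable (delay δ a u) :=
  Measurable.ite measurableSet_Iic measurable_const (hu.comp (measurable_id.sub_const δ))

theorem delay_zero_eq_indicator {M : Type*} [Zero M] (u : ℝ → M) :
    delay δ 0 u = (Ioi δ).indicator fun t => u (t - δ) := by
  ext t
  by_cases h : t ≤ δ <;> simp [delay, h, indicator, not_le.1]

variable {E : Type*} [NormedAddCommGroup E] {g x : ℝ → E} {x0 : E} {T : ℝ}

theorem intervalIntegrable_delay_zero (hT : 0 ≤ T) (hδ : 0 ≤ δ)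
    (hg : IntervalIntegrable g volume 0 T) :
    IntervalIntegrable (delay δ 0 g) volume 0 (T + δ) := by
  have hshift := hg.comp_sub_right δ
  rw [zero_add, intervalIntegrable_iff_integrableOn_Ioc_of_le (by linarith)] at hshift
  rw [intervalIntegrable_iff_integrableOn_Ioc_of_le (by linarith), delay_zero_eq_indicator,
    integrableOn_indicator_iff measurableSet_Ioi]
  refine hshift.mono_set fun τ hτ => ⟨hτ.1, hτ.2.2⟩

variable [NormedSpace ℝ E]

theorem integral_delay_zero_of_le (hδ : 0 ≤ δ) (ht : δ ≤ t) :
    ∫ τ in (0 : ℝ)..t, delay δ 0 g τ = ∫ τ in (0 : ℝ)..(t - δ), g τ := by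
  have hinter : Ioc 0 t ∩ Ioi δ = Ioc δ t := by
    ext τ
    simp only [mem_inter_iff, mem_Ioc, mem_Ioi]
    constructor
    · rintro ⟨⟨-, h⟩, h'⟩; exact ⟨h', h⟩
    · rintro ⟨h', h⟩; exact ⟨⟨by linarith, h⟩, h'⟩
  rw [intervalIntegral.integral_of_le (hδ.trans ht), delay_zero_eq_indicator,
    setIntegral_indicator measurableSet_Ioi, hinter, ← intervalIntegral.integral_of_le ht,
    intervalIntegral.integral_comp_sub_right, sub_self]

theorem integral_delay_zero_of_ge (ht : 0 ≤ t) (htδ : t ≤ δ) :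
    ∫ τ in (0 : ℝ)..t, delay δ 0 g τ = 0 := by
  rw [intervalIntegral.integral_congr (g := fun _ => 0), intervalIntegral.integral_zero]
  intro τ hτ
  rw [uIcc_of_le ht] at hτ
  exact delay_of_le (hτ.2.trans htδ)

theorem delay_eq_add_integral (hδ : 0 ≤ δ)
    (hx : ∀ t ∈ Icc 0 T, x t = x0 + ∫ τ in (0 : ℝ)..t, g τ) :
    ∀ t ∈ Icc 0 (T + δ), delay δ x0 x t = x0 + ∫ τ in (0 : ℝ)..t, delay δ 0 g τ := by
  intro t ht
  rcases le_or_gt t δ with htδ | hδt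
  · rw [delay_of_le htδ, integral_delay_zero_of_ge ht.1 htδ, add_zero]
  · rw [delay_of_lt hδt, integral_delay_zero_of_le hδ hδt.le,
      hx (t - δ) ⟨by linarith, by linarith [ht.2]⟩]

end Delay

structure IsAdmissible {E U : Type*} [NormedAddCommGroup E] [NormedSpace ℝ E] [MeasurableSpace U]
    (f : E → U → E) (S : Set U) (x0 : E) (T : ℝ) (s : ℝ → U) (x : ℝ → E) : Prop where
  measurable : Measurable s
  mem : ∀ t ∈ Icc 0 T, s t ∈ S
  intervalIntegrable : IntervalIntegrable (fun τ => f (x τ) (s τ)) volume 0 T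
  eq_add_integral : ∀ t ∈ Icc 0 T, x t = x0 + ∫ τ in (0 : ℝ)..t, f (x τ) (s τ)

namespace IsAdmissible

variable {E U : Type*} [NormedAddCommGroup E] [NormedSpace ℝ E] [MeasurableSpace U]
  {f : E → U → E} {S : Set U} {x0 : E} {T : ℝ} {s : ℝ → U} {x : ℝ → E}

theorem apply_zero (h : IsAdmissible f S x0 T s x) (hT : 0 ≤ T) : x 0 = x0 := by
  simpa using h.eq_add_integral 0 ⟨le_rfl, hT⟩

theorem mono (h : IsAdmissible f S x0 T s x) {T' : ℝ} (hT' : 0 ≤ T') (hT'T : T' ≤ T) :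
    IsAdmissible f S x0 T' s x where
  measurable := h.measurable
  mem t ht := h.mem t ⟨ht.1, ht.2.trans hT'T⟩
  intervalIntegrable := h.intervalIntegrable.mono_set
    (uIcc_subset_uIcc left_mem_uIcc (Icc_subset_uIcc ⟨hT', hT'T⟩))
  eq_add_integral t ht := h.eq_add_integral t ⟨ht.1, ht.2.trans hT'T⟩

theorem delayed (h : IsAdmissible f S x0 T s x) (hT : 0 ≤ T) {δ : ℝ} (hδ : 0 ≤ δ) {s0 : U}
    (hs0 : s0 ∈ S) (hf0 : f x0 s0 = 0) :
    IsAdmissible f S x0 (T + δ) (delay δ s0 s) (delay δ x0 x) := by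
  have hdyn : (fun τ => f (delay δ x0 x τ) (delay δ s0 s τ)) =
      delay δ 0 fun τ => f (x τ) (s τ) := by
    funext τ
    rw [delay_apply₂ f, hf0]
  refine ⟨h.measurable.delay s0, fun t ht => ?_, ?_, ?_⟩
  · rcases le_or_gt t δ with htδ | hδt
    · rwa [delay_of_le htδ]
    · rw [delay_of_lt hδt]
      exact h.mem _ ⟨by linarith, by linarith [ht.2]⟩
  · rw [hdyn]
    exact intervalIntegrable_delay_zero hT hδ h.intervalIntegrable
  · rw [hdyn]
    exact delay_eq_add_integral hδ h.eq_add_integral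

theorem continuousOn (h : IsAdmissible f S x0 T s x) : ContinuousOn x (Icc 0 T) :=
  continuousOn_of_eq_add_integral h.intervalIntegrable h.eq_add_integral

theorem exists_bound [TopologicalSpace U] (h : IsAdmissible f S x0 T s x)
    (hf : Continuous fun q : E × U => f q.1 q.2) (hS : IsCompact S) :
    ∃ C, ∀ t ∈ Icc 0 T, ‖f (x t) (s t)‖ ≤ C := by
  obtain ⟨C, hC⟩ := ((isCompact_Icc.image_of_continuousOn h.continuousOn).prod hS
    ).exists_bound_of_continuousOn hf.continuousOn
  exact ⟨C, fun t ht => hC (x t, s t) ⟨mem_image_of_mem x ht, h.mem t ht⟩⟩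

theorem isMinOn_of_forall_le {β : Type*} [Preorder β] {φ : E → β}
    (h : IsAdmissible f S x0 T s x)
    (hopt : ∀ s' x', IsAdmissible f S x0 T s' x' → φ (x T) ≤ φ (x' T))
    {s0 : U} (hs0 : s0 ∈ S) (hf0 : f x0 s0 = 0) : IsMinOn (fun t => φ (x t)) (Icc 0 T) T := by
  intro t ht
  have hT : t + (T - t) = T := by ring
  have hdelayed := (h.mono ht.1 ht.2).delayed ht.1 (sub_nonneg.2 ht.2) hs0 hf0
  rw [hT] at hdelayed
  have hend : delay (T - t) x0 x T = x t := by
    rcases ht.1.eq_or_lt with rfl | ht0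
    · rw [delay_of_le (by linarith), h.apply_zero (ht.1.trans ht.2)]
    · rw [delay_of_lt (by linarith), sub_sub_cancel]
  simpa [hend] using hopt _ _ hdelayed

end IsAdmissible

theorem pmp_constant_nonneg_general {N M : ℕ}
    (f : (Fin N → ℝ) → (Fin M → ℝ) → (Fin N → ℝ))
    (hf : ContDiff ℝ 1 (fun pr : (Fin N → ℝ) × (Fin M → ℝ) => f pr.1 pr.2))
    (S : Set (Fin M → ℝ)) (hS : IsCompact S)
    (φ : (Fin N → ℝ) → ℝ) (hφ : ContDiff ℝ 1 φ)
    (x0 : Fin N → ℝ) (tf : ℝ) (htf : 0 < tf)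
    -- the optimal pair (x*, s*)
    (sstar : ℝ → (Fin M → ℝ)) (xstar : ℝ → (Fin N → ℝ))
    (hsmeas : Measurable sstar) (hsval : ∀ t ∈ Set.Icc (0 : ℝ) tf, sstar t ∈ S)
    (hxint : IntervalIntegrable (fun τ => f (xstar τ) (sstar τ)) volume 0 tf)
    (hxsol : ∀ t ∈ Set.Icc (0 : ℝ) tf,
      xstar t = x0 + ∫ τ in (0 : ℝ)..t, f (xstar τ) (sstar τ))
    -- optimality: every admissible trajectory from x₀ has no smaller terminal cost
    (hopt : ∀ (s : ℝ → (Fin M → ℝ)) (x : ℝ → (Fin N → ℝ)),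
      Measurable s → (∀ t ∈ Set.Icc (0 : ℝ) tf, s t ∈ S) →
      x 0 = x0 →
      IntervalIntegrable (fun τ => f (x τ) (s τ)) volume 0 tf →
      (∀ t ∈ Set.Icc (0 : ℝ) tf, x t = x0 + ∫ τ in (0 : ℝ)..t, f (x τ) (s τ)) →
      φ (xstar tf) ≤ φ (x tf))
    -- the co-state: absolutely continuous, satisfying the adjoint equation a.e.
    (p q : ℝ → (Fin N → ℝ))
    (hqint : IntervalIntegrable q volume 0 tf)
    (hpsol : ∀ t ∈ Set.Icc (0 : ℝ) tf, p t = p 0 + ∫ τ in (0 : ℝ)..t, q τ)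
    -- terminal condition p(tf) = −∇φ(x*(tf))
    (hptf : ∀ i, p tf i = -(fderiv ℝ φ (xstar tf)) (Pi.single i 1))
    -- the PMP control Hamiltonian is a.e. constant, equal to λ
    (lam : ℝ)
    (hlam : ∀ᵐ t ∂(volume.restrict (Set.Icc (0 : ℝ) tf)),
      ∑ i, p t i * f (xstar t) (sstar t) i = lam)
    -- existence of a fixed point of the dynamics among admissible control values
    (s0 : Fin M → ℝ) (hs0 : s0 ∈ S) (hf0 : f x0 s0 = 0) :
    0 ≤ lam := by
  have hstar : IsAdmissible f S x0 tf sstar xstar := ⟨hsmeas, hsval, hxint, hxsol⟩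
  have hmin : IsLocalMinOn (fun t => φ (xstar t)) (Iic tf) tf :=
    (hstar.isMinOn_of_forall_le (fun s x h => hopt s x h.measurable h.mem (h.apply_zero htf.le)
      h.intervalIntegrable h.eq_add_integral) hs0 hf0).filter_mono
      (le_principal_iff.2 (Icc_mem_nhdsLE htf))
  obtain ⟨C, hC⟩ := hstar.exists_bound hf.continuous hS
  set D := fderiv ℝ φ (xstar tf)
  have hD : ∀ v, D v = -(p tf ⬝ᵥ v) := fun v => by
    rw [D.apply_eq_dotProduct, ← neg_dotProduct]
    congr 1
    ext i
    simp [hptf]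
  have hIcc : ∀ᶠ τ in 𝓝[≤] tf ⊓ ae volume, τ ∈ Icc 0 tf :=
    Eventually.filter_mono inf_le_left (Icc_mem_nhdsLE htf)
  have hp : Tendsto p (𝓝[≤] tf ⊓ ae volume) (𝓝 (p tf)) :=
    (((continuousOn_of_eq_add_integral hqint hpsol) tf ⟨htf.le, le_rfl⟩).mono_of_mem_nhdsWithin
      (Icc_mem_nhdsLE htf)).tendsto.mono_left inf_le_left
  have hH :
      Tendsto (fun τ => p tf ⬝ᵥ f (xstar τ) (sstar τ)) (𝓝[≤] tf ⊓ ae volume) (𝓝 lam) := by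
    refine tendsto_dotProduct_of_eventually_eq hp (hIcc.mono hC) ?_
    filter_upwards [hIcc, ((ae_restrict_iff' measurableSet_Icc).1 hlam).filter_mono inf_le_right]
      with τ hτ hHτ using hHτ hτ
  have hDx : HasDerivWithinAt (fun t => D (xstar t)) (-lam) (Iic tf) tf :=
    hasDerivWithinAt_Iic_of_eq_add_integral htf
      ⟨D.integrable_comp hxint.1, D.integrable_comp hxint.2⟩ (D.comp_eq_add_integral hxint hxsol)
      (by simpa only [hD] using hH.neg)
  have hderiv : HasDerivWithinAt (fun t => φ (xstar t)) (-lam) (Iic tf) tf :=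
    (hφ.differentiable one_ne_zero).differentiableAt.hasFDerivAt.hasDerivWithinAt_comp_of_isBigO
      (isBigO_sub_of_eq_add_integral htf hxint hC hxsol) hDx
  linarith [hmin.hasDerivWithinAt_Iic_nonpos hderiv]

/-- **Proposition 2** (nonnegativity of the PMP constant): if there is an admissible control
value `s₀ ∈ S` keeping the initial state fixed (`f(x₀, s₀) = 0`), then the constant value `λ`
of the PMP control Hamiltonian along an optimal trajectory is nonnegative. -/
theorem pmp_constant_nonneg {N M : ℕ}
    (f : (Fin N → ℝ) → (Fin M → ℝ) → (Fin N → ℝ))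
    (hf : ContDiff ℝ 1 (fun pr : (Fin N → ℝ) × (Fin M → ℝ) => f pr.1 pr.2))
    (S : Set (Fin M → ℝ)) (hS : IsCompact S)
    (φ : (Fin N → ℝ) → ℝ) (hφ : ContDiff ℝ 1 φ)
    (x0 : Fin N → ℝ) (tf : ℝ) (htf : 0 < tf)
    -- the optimal pair (x*, s*)
    (sstar : ℝ → (Fin M → ℝ)) (xstar : ℝ → (Fin N → ℝ))
    (hsmeas : Measurable sstar) (hsval : ∀ t ∈ Set.Icc (0 : ℝ) tf, sstar t ∈ S)
    (hx0 : xstar 0 = x0)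
    (hxint : IntervalIntegrable (fun τ => f (xstar τ) (sstar τ)) volume 0 tf)
    (hxsol : ∀ t ∈ Set.Icc (0 : ℝ) tf,
      xstar t = x0 + ∫ τ in (0 : ℝ)..t, f (xstar τ) (sstar τ))
    -- optimality: every admissible trajectory from x₀ has no smaller terminal cost
    (hopt : ∀ (s : ℝ → (Fin M → ℝ)) (x : ℝ → (Fin N → ℝ)),
      Measurable s → (∀ t ∈ Set.Icc (0 : ℝ) tf, s t ∈ S) →
      x 0 = x0 →
      IntervalIntegrable (fun τ => f (x τ) (s τ)) volume 0 tf →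
      (∀ t ∈ Set.Icc (0 : ℝ) tf, x t = x0 + ∫ τ in (0 : ℝ)..t, f (x τ) (s τ)) →
      φ (xstar tf) ≤ φ (x tf))
    -- the co-state: absolutely continuous, satisfying the adjoint equation a.e.
    (p q : ℝ → (Fin N → ℝ))
    (hqint : IntervalIntegrable q volume 0 tf)
    (hpsol : ∀ t ∈ Set.Icc (0 : ℝ) tf, p t = p 0 + ∫ τ in (0 : ℝ)..t, q τ)
    (hadj : ∀ᵐ t ∂(volume.restrict (Set.Icc (0 : ℝ) tf)),
      ∀ w : Fin N → ℝ,
        ∑ i, q t i * w i = -∑ i, p t i * (fderiv ℝ (fun y => f y (sstar t)) (xstar t)) w i)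
    -- terminal condition p(tf) = −∇φ(x*(tf))
    (hptf : ∀ i, p tf i = -(fderiv ℝ φ (xstar tf)) (Pi.single i 1))
    -- the PMP control Hamiltonian is a.e. constant, equal to λ
    (lam : ℝ)
    (hlam : ∀ᵐ t ∂(volume.restrict (Set.Icc (0 : ℝ) tf)),
      ∑ i, p t i * f (xstar t) (sstar t) i = lam)
    -- existence of a fixed point of the dynamics among admissible control values
    (s0 : Fin M → ℝ) (hs0 : s0 ∈ S) (hf0 : f x0 s0 = 0) :
    0 ≤ lam :=
  pmp_constant_nonneg_general f hf S hS φ hφ x0 tf htf sstar xstar hsmeas hsval hxint hxsol hopt p q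
    hqint hpsol hptf lam hlam s0 hs0 hf0

end Stmt4
end
end

section
/- (Inactive time constraint from the excited state: the counterexample of Section IV C.) There exists ε > 0 such that for every measurable control s : [0,ε] → [0,1] and every absolutely continuous v : [0,ε] → ℝ³ with v̇(t) = M(s(t)) v(t) almost everywhere and v(0) = (1, 0, 0), one has v₃(t) ≥ 0 for all t ∈ [0, ε]. Consequently, starting from the excited state of B, the cost Tr(Cρ(t)) = v₃(t)/2 cannot be made smaller than its initial value 0 for any t ≤ ε, no matter the control. -/
open MeasureTheory

noncomputable section

namespace Stmt10

/-- The Bloch-equation generator `M(s)` for the spin-1/2 problem with driver `B = σx/2`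
and target `C = σz/2`. -/
def M (s : ℝ) : Matrix (Fin 3) (Fin 3) ℝ :=
  !![0, -(1 - s), 0; 1 - s, 0, -s; 0, s, 0]

/-- `v` is an absolutely continuous solution of the controlled Bloch equation
`v̇(t) = M(s(t)) v(t)` on `[0, tf]` (integral form). -/
def IsBlochSol (tf : ℝ) (s : ℝ → ℝ) (v : ℝ → Fin 3 → ℝ) : Prop :=
  IntervalIntegrable (fun τ => (M (s τ)).mulVec (v τ)) volume 0 tf ∧
  ∀ t ∈ Set.Icc (0 : ℝ) tf, v t = v 0 + ∫ τ in (0 : ℝ)..t, (M (s τ)).mulVec (v τ)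

open Set Filter Topology

/-!
Write `v = (x, y, z)`. In the sup norm `‖M(σ) w‖ ≤ ‖w‖` for `σ ∈ [0, 1]`, so `‖v‖ ≤ 2` on `[0, 1/2]`
and hence `x ≥ 0` there; thus `a(t) = ∫₀ᵗ (1 - s) x` is nonnegative and nondecreasing, and
`y = a - ∫ s z`, `z = ∫ s y`. If `z ≥ -N` on `[0, T]`, integrating four times gives, for `τ ≤ t`,
`y(τ) ≤ a(t) + N t`, `z(τ) ≤ (a(t) + N t) τ`, `y(t) ≥ -N t³/2` and `z(t) ≥ -N t⁴/8`. The lower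
bound on `z` therefore improves by the factor `T⁴/8 < 1`; iterating it from the bound given by
continuity forces `z ≥ 0`.
-/

@[simp] lemma M_mulVec_zero (σ : ℝ) (w : Fin 3 → ℝ) : (M σ).mulVec w 0 = -(1 - σ) * w 1 := by
  simp [M, Matrix.mulVec, dotProduct, Fin.sum_univ_three]

@[simp] lemma M_mulVec_one (σ : ℝ) (w : Fin 3 → ℝ) :
    (M σ).mulVec w 1 = (1 - σ) * w 0 - σ * w 2 := by
  simp [M, Matrix.mulVec, dotProduct, Fin.sum_univ_three]; ring

@[simp] lemma M_mulVec_two (σ : ℝ) (w : Fin 3 → ℝ) : (M σ).mulVec w 2 = σ * w 1 := by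
  simp [M, Matrix.mulVec, dotProduct, Fin.sum_univ_three]

lemma norm_M_mulVec_le {σ : ℝ} (hσ : σ ∈ Icc (0 : ℝ) 1) (w : Fin 3 → ℝ) :
    ‖(M σ).mulVec w‖ ≤ ‖w‖ := by
  have hw : ∀ i, -‖w‖ ≤ w i ∧ w i ≤ ‖w‖ := fun i => abs_le.1 (by simpa using norm_le_pi_norm w i)
  obtain ⟨hw₀, hw₀'⟩ := hw 0
  obtain ⟨hw₁, hw₁'⟩ := hw 1
  obtain ⟨hw₂, hw₂'⟩ := hw 2
  refine (pi_norm_le_iff_of_nonneg (norm_nonneg w)).2 fun i => ?_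
  rw [Real.norm_eq_abs, abs_le]
  fin_cases i <;> simp only [Fin.zero_eta, Fin.mk_one, Fin.reduceFinMk, M_mulVec_zero,
    M_mulVec_one, M_mulVec_two] <;> constructor <;> nlinarith [hσ.1, hσ.2]

lemma mul_le_of_mem_Icc_of_le {s w c : ℝ} (hs : s ∈ Icc (0 : ℝ) 1) (hc : 0 ≤ c) (hw : w ≤ c) :
    s * w ≤ c := by
  rcases le_total 0 w with hw0 | hw0
  · nlinarith [hs.2]
  · nlinarith [hs.1]

lemma integral_mul_le_of_le_mul_pow {s w : ℝ → ℝ} {t c : ℝ} (k : ℕ) (ht : 0 ≤ t) (hc : 0 ≤ c)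
    (hs : ∀ σ ∈ Icc 0 t, s σ ∈ Icc (0 : ℝ) 1)
    (hsw : IntervalIntegrable (fun σ => s σ * w σ) volume 0 t)
    (hw : ∀ σ ∈ Icc 0 t, w σ ≤ c * σ ^ k) :
    ∫ σ in 0..t, s σ * w σ ≤ c * t ^ (k + 1) / (k + 1) :=
  calc ∫ σ in 0..t, s σ * w σ ≤ ∫ σ in 0..t, c * σ ^ k :=
        intervalIntegral.integral_mono_on ht hsw
          ((by fun_prop : Continuous fun σ : ℝ => c * σ ^ k).intervalIntegrable _ _) fun σ hσ =>
            mul_le_of_mem_Icc_of_le (hs σ hσ) (mul_nonneg hc (pow_nonneg hσ.1 k)) (hw σ hσ)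
    _ = c * t ^ (k + 1) / (k + 1) := by simp [integral_pow]; ring

lemma neg_le_integral_mul_of_neg_mul_pow_le {s w : ℝ → ℝ} {t c : ℝ} (k : ℕ) (ht : 0 ≤ t)
    (hc : 0 ≤ c) (hs : ∀ σ ∈ Icc 0 t, s σ ∈ Icc (0 : ℝ) 1)
    (hsw : IntervalIntegrable (fun σ => s σ * w σ) volume 0 t)
    (hw : ∀ σ ∈ Icc 0 t, -(c * σ ^ k) ≤ w σ) :
    -(c * t ^ (k + 1) / (k + 1)) ≤ ∫ σ in 0..t, s σ * w σ := by
  have h := integral_mul_le_of_le_mul_pow (w := fun σ => -w σ) k ht hc hs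
    (by simp only [mul_neg]; exact hsw.neg) fun σ hσ => neg_le.1 (hw σ hσ)
  simp only [mul_neg, intervalIntegral.integral_neg] at h
  linarith

lemma monotoneOn_integral_of_nonneg {f : ℝ → ℝ} {T : ℝ} (hf : IntervalIntegrable f volume 0 T)
    (hf₀ : ∀ t ∈ Icc 0 T, 0 ≤ f t) : MonotoneOn (fun t => ∫ τ in 0..t, f τ) (Icc 0 T) :=
  fun p hp q hq hpq => by
    refine intervalIntegral.integral_mono_interval le_rfl hp.1 hpq ?_
      (hf.mono_set (uIcc_subset_uIcc_left (Icc_subset_uIcc hq)))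
    filter_upwards [ae_restrict_mem measurableSet_Ioc] with τ hτ
    exact hf₀ τ ⟨hτ.1.le, hτ.2.trans hq.2⟩

lemma intervalIntegrable_mul_of_continuousOn {s w : ℝ → ℝ} {T : ℝ} (hT : 0 ≤ T)
    (hsm : Measurable s) (hs : ∀ t ∈ Icc 0 T, s t ∈ Icc (0 : ℝ) 1)
    (hw : ContinuousOn w (Icc 0 T)) :
    IntervalIntegrable (fun t => s t * w t) volume 0 T := by
  rw [intervalIntegrable_iff_integrableOn_Icc_of_le hT]
  refine hw.integrableOn_Icc.bdd_mul (c := 1) hsm.aestronglyMeasurable ?_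
  filter_upwards [ae_restrict_mem measurableSet_Icc] with t ht
  simpa [abs_le] using ⟨(hs t ht).1.trans' (by norm_num), (hs t ht).2⟩

lemma norm_le_div_of_eq_add_integral {E : Type*} [NormedAddCommGroup E] [NormedSpace ℝ E]
    {v f : ℝ → E} {T : ℝ} (hT : T < 1) (hv : ContinuousOn v (Icc 0 T))
    (heq : ∀ t ∈ Icc 0 T, v t = v 0 + ∫ τ in 0..t, f τ)
    (hf : ∀ t ∈ Icc 0 T, ‖f t‖ ≤ ‖v t‖) :
    ∀ t ∈ Icc 0 T, ‖v t‖ ≤ ‖v 0‖ / (1 - T) := by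
  intro t ht
  obtain ⟨S, hS, hmax⟩ := isCompact_Icc.exists_isMaxOn ⟨t, ht⟩ hv.norm
  have hint : ‖∫ τ in 0..S, f τ‖ ≤ ‖v S‖ * |S - 0| :=
    intervalIntegral.norm_integral_le_of_norm_le_const fun τ hτ => by
      rw [uIoc_of_le hS.1] at hτ
      have hτ' : τ ∈ Icc 0 T := ⟨hτ.1.le, hτ.2.trans hS.2⟩
      exact (hf τ hτ').trans (hmax hτ')
  have hvS : ‖v S‖ ≤ ‖v 0‖ + ‖v S‖ * S := by
    calc ‖v S‖ = ‖v 0 + ∫ τ in 0..S, f τ‖ := by rw [← heq S hS]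
      _ ≤ ‖v 0‖ + ‖v S‖ * S := by
        rw [sub_zero, abs_of_nonneg hS.1] at hint
        exact (norm_add_le _ _).trans (add_le_add le_rfl hint)
  have htS : ‖v t‖ ≤ ‖v S‖ := hmax ht
  rw [le_div_iff₀ (sub_pos.2 hT)]
  nlinarith [mul_le_mul_of_nonneg_right htS (sub_pos.2 hT).le,
    mul_nonneg (norm_nonneg (v S)) (sub_nonneg.2 hS.2)]

lemma nonneg_of_neg_le_imp_neg_mul_le {α : Type*} {S : Set α} {f : α → ℝ} {q : ℝ}
    (hq₀ : 0 ≤ q) (hq₁ : q < 1) (hf : BddBelow (f '' S))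
    (h : ∀ N, 0 ≤ N → (∀ x ∈ S, -N ≤ f x) → ∀ x ∈ S, -(q * N) ≤ f x) :
    ∀ x ∈ S, 0 ≤ f x := by
  obtain ⟨m, hm⟩ := hf
  have hpow : ∀ n : ℕ, ∀ x ∈ S, -(q ^ n * |m|) ≤ f x := by
    intro n
    induction n with
    | zero => exact fun x hx => by simpa using (neg_abs_le m).trans (hm ⟨x, hx, rfl⟩)
    | succ n ih => simpa only [pow_succ', mul_assoc] using h _ (by positivity) ih
  have hlim : Tendsto (fun n : ℕ => -(q ^ n * |m|)) atTop (𝓝 0) := by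
    simpa using ((tendsto_pow_atTop_nhds_zero_of_lt_one hq₀ hq₁).mul_const |m|).neg
  exact fun x hx => le_of_tendsto' hlim fun n => hpow n x hx

namespace IsBlochSol

variable {T : ℝ} {s : ℝ → ℝ} {v : ℝ → Fin 3 → ℝ}

lemma continuousOn (hv : IsBlochSol T s v) : ContinuousOn v (Icc 0 T) := by
  have h := (intervalIntegral.continuousOn_primitive_interval' hv.1 left_mem_uIcc).mono
    (Icc_subset_uIcc (a := (0 : ℝ)) (b := T))
  exact (continuousOn_const.add h).congr fun t ht => hv.2 t ht

lemma apply_eq (hv : IsBlochSol T s v) {t : ℝ} (ht : t ∈ Icc 0 T) (i : Fin 3) :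
    v t i = v 0 i + ∫ τ in 0..t, (M (s τ)).mulVec (v τ) i := by
  have hint := hv.1.mono_set (uIcc_subset_uIcc_left (Icc_subset_uIcc ht))
  rw [hv.2 t ht, Pi.add_apply, add_right_inj]
  exact ((ContinuousLinearMap.proj (R := ℝ) (φ := fun _ : Fin 3 => ℝ) i).intervalIntegral_comp_comm
    hint).symm

lemma apply_zero_nonneg (hv : IsBlochSol T s v) (hT : T ≤ 1 / 2)
    (hs : ∀ t ∈ Icc 0 T, s t ∈ Icc (0 : ℝ) 1) (h₀ : v 0 = ![1, 0, 0]) :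
    ∀ t ∈ Icc 0 T, 0 ≤ v t 0 := by
  intro t ht
  have hv₀ : ‖v 0‖ ≤ 1 :=
    (pi_norm_le_iff_of_nonneg zero_le_one).2 fun i => by rw [h₀]; fin_cases i <;> simp
  have hbound := norm_le_div_of_eq_add_integral (by linarith) hv.continuousOn hv.2
    fun τ hτ => norm_M_mulVec_le (hs τ hτ) (v τ)
  have hint : ‖∫ τ in 0..t, (M (s τ)).mulVec (v τ) 0‖ ≤ 2 * |t - 0| :=
    intervalIntegral.norm_integral_le_of_norm_le_const fun τ hτ => by
      rw [uIoc_of_le ht.1] at hτ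
      have hτ' : τ ∈ Icc 0 T := ⟨hτ.1.le, hτ.2.trans ht.2⟩
      calc ‖(M (s τ)).mulVec (v τ) 0‖ ≤ ‖v τ‖ :=
            (norm_le_pi_norm _ 0).trans (norm_M_mulVec_le (hs τ hτ') (v τ))
        _ ≤ ‖v 0‖ / (1 - T) := hbound τ hτ'
        _ ≤ 2 := by rw [div_le_iff₀ (by linarith)]; linarith
  rw [Real.norm_eq_abs, sub_zero, abs_of_nonneg ht.1, abs_le] at hint
  rw [hv.apply_eq ht 0, h₀]
  simp only [Matrix.cons_val_zero]
  linarith [ht.2, hint.1]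

lemma apply_one_eq (hv : IsBlochSol T s v) (hsm : Measurable s)
    (hs : ∀ t ∈ Icc 0 T, s t ∈ Icc (0 : ℝ) 1) {t : ℝ} (ht : t ∈ Icc 0 T) :
    v t 1 = v 0 1 + (∫ τ in 0..t, (1 - s τ) * v τ 0) - ∫ τ in 0..t, s τ * v τ 2 := by
  have hsub : Icc 0 t ⊆ Icc 0 T := Icc_subset_Icc le_rfl ht.2
  have hs' : ∀ τ ∈ Icc 0 t, s τ ∈ Icc (0 : ℝ) 1 := fun τ hτ => hs τ (hsub hτ)
  have hcont : ∀ i, ContinuousOn (fun τ => v τ i) (Icc 0 t) :=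
    fun i => ((continuous_apply i).comp_continuousOn hv.continuousOn).mono hsub
  rw [hv.apply_eq ht 1]
  simp only [M_mulVec_one]
  rw [intervalIntegral.integral_sub
    (intervalIntegrable_mul_of_continuousOn (s := fun τ => 1 - s τ) ht.1
      (measurable_const.sub hsm) (fun τ hτ => Icc.mem_iff_one_sub_mem.1 (hs' τ hτ)) (hcont 0))
    (intervalIntegrable_mul_of_continuousOn ht.1 hsm hs' (hcont 2))]
  ring

lemma apply_two_eq (hv : IsBlochSol T s v) {t : ℝ} (ht : t ∈ Icc 0 T) :
    v t 2 = v 0 2 + ∫ τ in 0..t, s τ * v τ 1 := by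
  simpa using hv.apply_eq ht 2

end IsBlochSol

lemma neg_mul_le_of_neg_le_of_integral_eq {s a y z : ℝ → ℝ} {T N : ℝ} (hT : T ^ 2 ≤ 2)
    (hN : 0 ≤ N) (hs : ∀ t ∈ Icc 0 T, s t ∈ Icc (0 : ℝ) 1) (ha : MonotoneOn a (Icc 0 T))
    (ha₀ : 0 ≤ a 0) (hsy : IntervalIntegrable (fun t => s t * y t) volume 0 T)
    (hsz : IntervalIntegrable (fun t => s t * z t) volume 0 T)
    (hy : ∀ t ∈ Icc 0 T, y t = a t - ∫ τ in 0..t, s τ * z τ)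
    (hz : ∀ t ∈ Icc 0 T, z t = ∫ τ in 0..t, s τ * y τ)
    (hzN : ∀ t ∈ Icc 0 T, -N ≤ z t) :
    ∀ t ∈ Icc 0 T, -(T ^ 4 / 8 * N) ≤ z t := by
  have hsub : ∀ {t}, t ∈ Icc 0 T → Icc 0 t ⊆ Icc 0 T := fun ht => Icc_subset_Icc le_rfl ht.2
  have huIcc : ∀ {t}, t ∈ Icc 0 T → uIcc 0 t ⊆ uIcc 0 T :=
    fun ht => uIcc_subset_uIcc_left (Icc_subset_uIcc ht)
  have hy_ge : ∀ t ∈ Icc 0 T, -(N / 2 * t ^ 3) ≤ y t := by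
    intro t ht
    have hat : 0 ≤ a t := ha₀.trans (ha ⟨le_rfl, ht.1.trans ht.2⟩ ht ht.1)
    have hb : 0 ≤ a t + N * t := add_nonneg hat (mul_nonneg hN ht.1)
    have hy_le : ∀ τ ∈ Icc 0 t, y τ ≤ a t + N * t := by
      intro τ hτ
      have hint := neg_le_integral_mul_of_neg_mul_pow_le 0 hτ.1 hN
        (fun σ hσ => hs σ (hsub (hsub ht hτ) hσ)) (hsz.mono_set (huIcc (hsub ht hτ)))
        fun σ hσ => by simpa using hzN σ (hsub (hsub ht hτ) hσ)
      have haτ := ha (hsub ht hτ) ht hτ.2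
      rw [hy τ (hsub ht hτ)]
      simp only [zero_add, Nat.cast_zero, div_one] at hint
      nlinarith [hτ.2]
    have hz_le : ∀ τ ∈ Icc 0 t, z τ ≤ (a t + N * t) * τ := by
      intro τ hτ
      have hint := integral_mul_le_of_le_mul_pow 0 hτ.1 hb
        (fun σ hσ => hs σ (hsub (hsub ht hτ) hσ)) (hsy.mono_set (huIcc (hsub ht hτ)))
        fun σ hσ => by simpa using hy_le σ ⟨hσ.1, hσ.2.trans hτ.2⟩
      rw [hz τ (hsub ht hτ)]
      simpa using hint
    have hint := integral_mul_le_of_le_mul_pow 1 ht.1 hb (fun σ hσ => hs σ (hsub ht hσ))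
      (hsz.mono_set (huIcc ht)) fun σ hσ => by simpa using hz_le σ hσ
    have ht2 : t ^ 2 ≤ 2 := (pow_le_pow_left₀ ht.1 ht.2 2).trans hT
    rw [hy t ht]
    norm_num at hint
    nlinarith [mul_nonneg hat (sub_nonneg.2 ht2)]
  intro t ht
  have hint := neg_le_integral_mul_of_neg_mul_pow_le 3 ht.1 (div_nonneg hN zero_le_two)
    (fun σ hσ => hs σ (hsub ht hσ)) (hsy.mono_set (huIcc ht)) fun σ hσ => hy_ge σ (hsub ht hσ)
  have ht4 : t ^ 4 ≤ T ^ 4 := pow_le_pow_left₀ ht.1 ht.2 4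
  rw [hz t ht]
  norm_num at hint
  nlinarith

/-- **Inactive time constraint from the excited state** (the counterexample of Sec. IV C):
starting from the excited state `(1,0,0)` of `B`, for some `ε > 0` the third Bloch component
stays nonnegative on `[0, ε]` for every admissible control, so the cost `v₃/2` cannot be
lowered below its initial value `0`. -/
theorem excited_state_inactive_constraint :
    ∃ ε > 0, ∀ (s : ℝ → ℝ), Measurable s →
      (∀ t ∈ Set.Icc (0 : ℝ) ε, s t ∈ Set.Icc (0 : ℝ) 1) →
      ∀ v : ℝ → Fin 3 → ℝ, IsBlochSol ε s v → v 0 = ![1, 0, 0] →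
      ∀ t ∈ Set.Icc (0 : ℝ) ε, 0 ≤ v t 2 := by
  refine ⟨1 / 2, by norm_num, fun s hsm hs v hv h₀ => ?_⟩
  have hT : (0 : ℝ) ≤ 1 / 2 := by norm_num
  have hcont : ∀ i, ContinuousOn (fun t => v t i) (Icc 0 (1 / 2)) :=
    fun i => (continuous_apply i).comp_continuousOn hv.continuousOn
  have hs' : ∀ t ∈ Icc (0 : ℝ) (1 / 2), 1 - s t ∈ Icc (0 : ℝ) 1 :=
    fun t ht => Icc.mem_iff_one_sub_mem.1 (hs t ht)
  have hx := hv.apply_zero_nonneg le_rfl hs h₀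
  have hmono := monotoneOn_integral_of_nonneg
    (intervalIntegrable_mul_of_continuousOn (s := fun τ => 1 - s τ) hT (measurable_const.sub hsm)
      hs' (hcont 0)) fun t ht => mul_nonneg (hs' t ht).1 (hx t ht)
  refine nonneg_of_neg_le_imp_neg_mul_le (q := (1 / 2) ^ 4 / 8) (by norm_num) (by norm_num)
    (isCompact_Icc.bddBelow_image (hcont 2)) fun N hN hzN => ?_
  exact neg_mul_le_of_neg_le_of_integral_eq (y := fun t => v t 1) (z := fun t => v t 2)
    (by norm_num) hN hs hmono (by simp) (intervalIntegrable_mul_of_continuousOn hT hsm hs (hcont 1))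
    (intervalIntegrable_mul_of_continuousOn hT hsm hs (hcont 2))
    (fun t ht => by simpa [h₀] using hv.apply_one_eq hsm hs ht)
    (fun t ht => by simpa [h₀] using hv.apply_two_eq ht) hzN

end Stmt10
end
end

section
/- (Theorem 5: final bang for the open system.) Let B, C be Hermitian d_S×d_S matrices, H_E Hermitian d_E×d_E, H_I Hermitian on ℂ^{d_S}⊗ℂ^{d_E}, H_tot(v) := (C + v(B−C))⊗I_E + H_I + I_S⊗H_E, and t_f > 0. Assume [H_I, C⊗I_E] = 0. Let ρ, p : [0,t_f] → (Hermitian matrices on ℂ^{d_S}⊗ℂ^{d_E}) be continuous, let s : [0,t_f] → [0,1], and suppose: (a) p(t_f) = −C⊗I_E; (b) there is a real constant λ > 0 with Re Tr(p(t)·(−i)[H_tot(s(t)), ρ(t)]) = λ for every t ∈ [0,t_f]; and (c) for every t ∈ [0,t_f] and every v ∈ [0,1], Re Tr(p(t)·(−i)[H_tot(v), ρ(t)]) ≤ λ. Then there exists ε > 0 such that s(t) = 1 for all t ∈ (t_f − ε, t_f]. -/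
/-!
The control enters `H_tot(v)` affinely, so the PMP Hamiltonian is `f(t) + v g(t)` with
switching function `g(t) = Re Tr(p(t) K_{(B−C)⊗I_E}(ρ(t)))`. At `t_f` the co-state `−C⊗I_E`
commutes with `H_tot(0)` (this is where `[H_I, C⊗I_E] = 0` enters), so `f(t_f) = 0` and
`s(t_f) g(t_f) = λ > 0` forces `g(t_f) > 0`. By continuity `g > 0` on a final interval, where maximality of `s(t)` among
`v ∈ [0,1]` gives `s(t) = 1`.
-/

open Matrix Filter Set
open scoped Kronecker Topology

noncomputable section

namespace Stmt12

variable {dS dE : ℕ}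

/-- The superoperator `K_X(ρ) = −i[X, ρ]` on the joint system–environment space. -/
def K (X ρ : Matrix (Fin dS × Fin dE) (Fin dS × Fin dE) ℂ) :
    Matrix (Fin dS × Fin dE) (Fin dS × Fin dE) ℂ :=
  (-Complex.I) • (X * ρ - ρ * X)

/-- The total Hamiltonian `H_tot(v) = (C + v(B−C))⊗I_E + H_I + I_S⊗H_E`. -/
def Htot (B C : Matrix (Fin dS) (Fin dS) ℂ) (HE : Matrix (Fin dE) (Fin dE) ℂ)
    (HI : Matrix (Fin dS × Fin dE) (Fin dS × Fin dE) ℂ) (v : ℝ) :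
    Matrix (Fin dS × Fin dE) (Fin dS × Fin dE) ℂ :=
  (C + (v : ℂ) • (B - C)) ⊗ₖ (1 : Matrix (Fin dE) (Fin dE) ℂ) + HI +
    (1 : Matrix (Fin dS) (Fin dS) ℂ) ⊗ₖ HE

theorem _root_.Matrix.trace_mul_commutator_eq_zero {n R : Type*} [Fintype n] [CommRing R]
    {M H : Matrix n n R} (h : Commute M H) (X : Matrix n n R) :
    trace (M * (H * X - X * H)) = 0 := by
  rw [mul_sub, trace_sub, sub_eq_zero, ← mul_assoc, h.eq, mul_assoc, trace_mul_comm,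
    mul_assoc]

theorem _root_.Matrix.commute_kronecker_one_one_kronecker {m n R : Type*} [Fintype m] [Fintype n]
    [DecidableEq m] [DecidableEq n] [CommSemiring R] (A : Matrix m m R) (D : Matrix n n R) :
    Commute (A ⊗ₖ (1 : Matrix n n R)) ((1 : Matrix m m R) ⊗ₖ D) := by
  simp only [Commute, SemiconjBy, ← mul_kronecker_mul, mul_one, one_mul]

variable (B C : Matrix (Fin dS) (Fin dS) ℂ) (HE : Matrix (Fin dE) (Fin dE) ℂ)
  (HI : Matrix (Fin dS × Fin dE) (Fin dS × Fin dE) ℂ)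

theorem trace_mul_K_eq_zero_of_commute {M H : Matrix (Fin dS × Fin dE) (Fin dS × Fin dE) ℂ}
    (h : Commute M H) (R : Matrix (Fin dS × Fin dE) (Fin dS × Fin dE) ℂ) :
    trace (M * K H R) = 0 := by
  rw [K, mul_smul_comm, trace_smul, trace_mul_commutator_eq_zero h, smul_zero]

theorem K_add_smul (X Y R : Matrix (Fin dS × Fin dE) (Fin dS × Fin dE) ℂ) (c : ℂ) :
    K (X + c • Y) R = K X R + c • K Y R := by
  simp only [K, add_mul, mul_add, smul_mul_assoc, mul_smul_comm]
  module

theorem Htot_eq_add_smul (v : ℝ) :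
    Htot B C HE HI v
      = Htot B C HE HI 0 + (v : ℂ) • ((B - C) ⊗ₖ (1 : Matrix (Fin dE) (Fin dE) ℂ)) := by
  simp only [Htot, add_kronecker, smul_kronecker, Complex.ofReal_zero, zero_smul, add_zero]
  abel

theorem commute_Htot_zero (hcomm : Commute HI (C ⊗ₖ (1 : Matrix (Fin dE) (Fin dE) ℂ))) :
    Commute (C ⊗ₖ (1 : Matrix (Fin dE) (Fin dE) ℂ)) (Htot B C HE HI 0) := by
  simp only [Htot, Complex.ofReal_zero, zero_smul, add_zero]
  exact ((Commute.refl _).add_right hcomm.symm).add_right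
    (commute_kronecker_one_one_kronecker C HE)

theorem re_trace_mul_K_Htot (P R : Matrix (Fin dS × Fin dE) (Fin dS × Fin dE) ℂ) (v : ℝ) :
    (trace (P * K (Htot B C HE HI v) R)).re
      = (trace (P * K (Htot B C HE HI 0) R)).re
        + v * (trace (P * K ((B - C) ⊗ₖ (1 : Matrix (Fin dE) (Fin dE) ℂ)) R)).re := by
  rw [Htot_eq_add_smul, K_add_smul, mul_add, mul_smul_comm, trace_add, trace_smul, Complex.add_re,
    smul_eq_mul, Complex.re_ofReal_mul]

theorem continuousOn_re_trace_mul_K {S : Set ℝ}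
    {p ρ : ℝ → Matrix (Fin dS × Fin dE) (Fin dS × Fin dE) ℂ} (hp : ContinuousOn p S)
    (hρ : ContinuousOn ρ S) (X : Matrix (Fin dS × Fin dE) (Fin dS × Fin dE) ℂ) :
    ContinuousOn (fun t => (trace (p t * K X (ρ t))).re) S := by
  unfold K
  fun_prop

theorem exists_pos_forall_Ioc_of_eventually_nhdsLE {P : ℝ → Prop} {a : ℝ}
    (h : ∀ᶠ t in 𝓝[≤] a, P t) : ∃ ε > 0, ∀ t ∈ Ioc (a - ε) a, P t := by
  obtain ⟨l, hl, hsub⟩ := mem_nhdsLE_iff_exists_Ioc_subset.1 h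
  exact ⟨a - l, sub_pos.2 hl, fun t ht => hsub (by rwa [sub_sub_cancel] at ht)⟩

theorem open_system_final_bang_general
    (B C : Matrix (Fin dS) (Fin dS) ℂ)
    (HE : Matrix (Fin dE) (Fin dE) ℂ)
    (HI : Matrix (Fin dS × Fin dE) (Fin dS × Fin dE) ℂ)
    (hcomm : HI * (C ⊗ₖ (1 : Matrix (Fin dE) (Fin dE) ℂ))
      = (C ⊗ₖ (1 : Matrix (Fin dE) (Fin dE) ℂ)) * HI)
    (tf : ℝ) (htf : 0 < tf)
    (ρ p : ℝ → Matrix (Fin dS × Fin dE) (Fin dS × Fin dE) ℂ) (s : ℝ → ℝ)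
    (hρcont : ContinuousOn ρ (Set.Icc 0 tf)) (hpcont : ContinuousOn p (Set.Icc 0 tf))
    (hsval : ∀ t ∈ Set.Icc (0 : ℝ) tf, s t ∈ Set.Icc (0 : ℝ) 1)
    -- (a) terminal condition
    (hptf : p tf = -(C ⊗ₖ (1 : Matrix (Fin dE) (Fin dE) ℂ)))
    -- (b) the PMP control Hamiltonian is constant and equal to `λ > 0`
    (lam : ℝ) (hlam : 0 < lam)
    (hconst : ∀ t ∈ Set.Icc (0 : ℝ) tf,
      (Matrix.trace (p t * K (Htot B C HE HI (s t)) (ρ t))).re = lam)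
    -- (c) the maximum condition
    (hmax : ∀ t ∈ Set.Icc (0 : ℝ) tf, ∀ v ∈ Set.Icc (0 : ℝ) 1,
      (Matrix.trace (p t * K (Htot B C HE HI v) (ρ t))).re ≤ lam) :
    ∃ ε > 0, ∀ t ∈ Set.Ioc (tf - ε) tf, s t = 1 := by
  set g : ℝ → ℝ := fun t =>
    (trace (p t * K ((B - C) ⊗ₖ (1 : Matrix (Fin dE) (Fin dE) ℂ)) (ρ t))).re
  have h_affine : ∀ t v, (trace (p t * K (Htot B C HE HI v) (ρ t))).re
      = (trace (p t * K (Htot B C HE HI 0) (ρ t))).re + v * g t :=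
    fun t v => re_trace_mul_K_Htot B C HE HI (p t) (ρ t) v
  have htf_mem : tf ∈ Icc 0 tf := right_mem_Icc.2 htf.le
  have hg_tf : 0 < g tf := by
    have h_drift : (trace (p tf * K (Htot B C HE HI 0) (ρ tf))).re = 0 := by
      rw [hptf, neg_mul, trace_neg,
        trace_mul_K_eq_zero_of_commute (commute_Htot_zero B C HE HI hcomm), neg_zero,
        Complex.zero_re]
    have h := hconst tf htf_mem
    rw [h_affine, h_drift, zero_add] at h
    exact pos_of_mul_pos_right (h.symm ▸ hlam) (hsval tf htf_mem).1
  have hg_cont : ContinuousWithinAt g (Iic tf) tf :=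
    ((continuousOn_re_trace_mul_K hpcont hρcont _).continuousWithinAt
      htf_mem).mono_of_mem_nhdsWithin (Icc_mem_nhdsLE htf)
  refine exists_pos_forall_Ioc_of_eventually_nhdsLE ?_
  filter_upwards [continuousWithinAt_const.eventually_lt hg_cont hg_tf, Icc_mem_nhdsLE htf]
    with t hg_t ht
  have h_opt := hconst t ht
  have h_one := hmax t ht 1 ⟨zero_le_one, le_rfl⟩
  rw [h_affine] at h_opt h_one
  have h_slack : (1 - s t) * g t ≤ 0 := by linarith
  exact le_antisymm (hsval t ht).2 (by nlinarith)

/-- **Theorem 5** (final bang for the open system): if `[H_I, C⊗I_E] = 0` and the PMP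
conditions hold with an active final-time constraint (`λ > 0`) and terminal co-state
`p(tf) = −C⊗I_E`, then `s ≡ 1` on a final interval `(tf − ε, tf]`. -/
theorem open_system_final_bang
    (B C : Matrix (Fin dS) (Fin dS) ℂ) (hB : B.IsHermitian) (hC : C.IsHermitian)
    (HE : Matrix (Fin dE) (Fin dE) ℂ) (hHE : HE.IsHermitian)
    (HI : Matrix (Fin dS × Fin dE) (Fin dS × Fin dE) ℂ) (hHI : HI.IsHermitian)
    (hcomm : HI * (C ⊗ₖ (1 : Matrix (Fin dE) (Fin dE) ℂ))
      = (C ⊗ₖ (1 : Matrix (Fin dE) (Fin dE) ℂ)) * HI)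
    (tf : ℝ) (htf : 0 < tf)
    (ρ p : ℝ → Matrix (Fin dS × Fin dE) (Fin dS × Fin dE) ℂ) (s : ℝ → ℝ)
    (hρcont : ContinuousOn ρ (Set.Icc 0 tf)) (hpcont : ContinuousOn p (Set.Icc 0 tf))
    (hρHerm : ∀ t ∈ Set.Icc (0 : ℝ) tf, (ρ t).IsHermitian)
    (hpHerm : ∀ t ∈ Set.Icc (0 : ℝ) tf, (p t).IsHermitian)
    (hsval : ∀ t ∈ Set.Icc (0 : ℝ) tf, s t ∈ Set.Icc (0 : ℝ) 1)
    -- (a) terminal condition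
    (hptf : p tf = -(C ⊗ₖ (1 : Matrix (Fin dE) (Fin dE) ℂ)))
    -- (b) the PMP control Hamiltonian is constant and equal to `λ > 0`
    (lam : ℝ) (hlam : 0 < lam)
    (hconst : ∀ t ∈ Set.Icc (0 : ℝ) tf,
      (Matrix.trace (p t * K (Htot B C HE HI (s t)) (ρ t))).re = lam)
    -- (c) the maximum condition
    (hmax : ∀ t ∈ Set.Icc (0 : ℝ) tf, ∀ v ∈ Set.Icc (0 : ℝ) 1,
      (Matrix.trace (p t * K (Htot B C HE HI v) (ρ t))).re ≤ lam) :
    ∃ ε > 0, ∀ t ∈ Set.Ioc (tf - ε) tf, s t = 1 :=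
  open_system_final_bang_general B C HE HI hcomm tf htf ρ p s hρcont hpcont hsval hptf lam hlam
    hconst hmax

end Stmt12
end
end

section
/- (Theorem 6: initial bang for the open system.) Let B, C be Hermitian d_S×d_S matrices, H_E Hermitian d_E×d_E, H_I Hermitian on ℂ^{d_S}⊗ℂ^{d_E}, H_tot(v) := (C + v(B−C))⊗I_E + H_I + I_S⊗H_E, and t_f > 0. Let ρ, p : [0,t_f] → (Hermitian matrices on ℂ^{d_S}⊗ℂ^{d_E}) be continuous, let s : [0,t_f] → [0,1], and suppose: (a) ρ(0) = ρ₀ ⊗ ρ_E with ρ₀, ρ_E Hermitian, [ρ_E, H_E] = 0, [H_I, ρ₀⊗ρ_E] = 0, and [B, ρ₀] = 0; (b) there is a real constant λ > 0 with Re Tr(p(t)·(−i)[H_tot(s(t)), ρ(t)]) = λ for every t ∈ [0,t_f]; and (c) for every t ∈ [0,t_f] and every v ∈ [0,1], Re Tr(p(t)·(−i)[H_tot(v), ρ(t)]) ≤ λ. Then there exists ε > 0 such that s(t) = 0 for all t ∈ [0, ε). -/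
/-!
At `t = 0` the fully driven Hamiltonian `H_tot(1) = B ⊗ I + H_I + I ⊗ H_E` commutes with
`ρ₀ ⊗ ρ_E`, so the PMP Hamiltonian `F(t, v) = Re Tr(p(t) K_{H_tot(v)}(ρ(t)))` vanishes at
`(0, 1)` and, by continuity, `F(t, 1) < λ` on some `[0, ε)`. Since `F(t, ·)` is affine,
`F(t, 0) ≤ λ` and `F(t, 1) < λ` leave `v = 0` as the only point of `[0, 1]` where
`F(t, v) = λ`; hence `s(t) = 0` there.
-/

open Matrix
open scoped Kronecker

noncomputable section

namespace Stmt13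

variable {dS dE : ℕ}

/-- The superoperator `K_X(ρ) = −i[X, ρ]` on the joint system–environment space. -/
def K (X ρ : Matrix (Fin dS × Fin dE) (Fin dS × Fin dE) ℂ) :
    Matrix (Fin dS × Fin dE) (Fin dS × Fin dE) ℂ :=
  (-Complex.I) • (X * ρ - ρ * X)

/-- The total Hamiltonian `H_tot(v) = (C + v(B−C))⊗I_E + H_I + I_S⊗H_E`. -/
def Htot (B C : Matrix (Fin dS) (Fin dS) ℂ) (HE : Matrix (Fin dE) (Fin dE) ℂ)
    (HI : Matrix (Fin dS × Fin dE) (Fin dS × Fin dE) ℂ) (v : ℝ) :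
    Matrix (Fin dS × Fin dE) (Fin dS × Fin dE) ℂ :=
  (C + (v : ℂ) • (B - C)) ⊗ₖ (1 : Matrix (Fin dE) (Fin dE) ℂ) + HI +
    (1 : Matrix (Fin dS) (Fin dS) ℂ) ⊗ₖ HE

theorem _root_.eq_zero_of_affine_eq_of_le_of_lt {s x y a : ℝ} (hs : s ∈ Set.Icc (0 : ℝ) 1)
    (hx : x ≤ a) (hy : y < a) (h : (1 - s) * x + s * y = a) : s = 0 := by
  nlinarith [hs.1, hs.2]

theorem _root_.Matrix.commute_kronecker {R l m : Type*} [CommSemiring R] [Fintype l] [Fintype m]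
    {A A' : Matrix l l R} {D D' : Matrix m m R} (hA : Commute A A') (hD : Commute D D') :
    Commute (A ⊗ₖ D) (A' ⊗ₖ D') := by
  simp only [Commute, SemiconjBy, ← mul_kronecker_mul, hA.eq, hD.eq]

lemma K_eq_zero_of_commute {X ρ : Matrix (Fin dS × Fin dE) (Fin dS × Fin dE) ℂ}
    (h : Commute X ρ) : K X ρ = 0 := by
  simp [K, h.eq]

lemma K_add_smul (X D ρ : Matrix (Fin dS × Fin dE) (Fin dS × Fin dE) ℂ) (c : ℂ) :
    K (X + c • D) ρ = K X ρ + c • K D ρ := by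
  simp only [K, add_mul, mul_add, smul_mul_assoc, mul_smul_comm]
  module

section

variable (B C : Matrix (Fin dS) (Fin dS) ℂ) (HE : Matrix (Fin dE) (Fin dE) ℂ)
  (HI : Matrix (Fin dS × Fin dE) (Fin dS × Fin dE) ℂ)

lemma Htot_eq_Htot_zero_add_smul (v : ℝ) :
    Htot B C HE HI v =
      Htot B C HE HI 0 + (v : ℂ) • ((B - C) ⊗ₖ (1 : Matrix (Fin dE) (Fin dE) ℂ)) := by
  simp only [Htot, Complex.ofReal_zero, zero_smul, add_zero, add_kronecker, smul_kronecker]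
  abel

lemma commute_Htot_one_kronecker {ρ0 : Matrix (Fin dS) (Fin dS) ℂ}
    {ρE : Matrix (Fin dE) (Fin dE) ℂ}
    (hB : Commute B ρ0) (hHE : Commute HE ρE) (hHI : Commute HI (ρ0 ⊗ₖ ρE)) :
    Commute (Htot B C HE HI 1) (ρ0 ⊗ₖ ρE) := by
  have hH1 : Htot B C HE HI 1 = B ⊗ₖ (1 : Matrix (Fin dE) (Fin dE) ℂ) + HI + 1 ⊗ₖ HE := by
    simp [Htot]
  rw [hH1]
  exact ((commute_kronecker hB (Commute.one_left ρE)).add_left hHI).add_left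
    (commute_kronecker (Commute.one_left ρ0) hHE)

lemma re_trace_mul_K_Htot (P R : Matrix (Fin dS × Fin dE) (Fin dS × Fin dE) ℂ) (v : ℝ) :
    (trace (P * K (Htot B C HE HI v) R)).re =
      (1 - v) * (trace (P * K (Htot B C HE HI 0) R)).re +
        v * (trace (P * K (Htot B C HE HI 1) R)).re := by
  have hlin (w : ℝ) : (trace (P * K (Htot B C HE HI w) R)).re =
      (trace (P * K (Htot B C HE HI 0) R)).re +
        w * (trace (P * K ((B - C) ⊗ₖ (1 : Matrix (Fin dE) (Fin dE) ℂ)) R)).re := by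
    rw [Htot_eq_Htot_zero_add_smul, K_add_smul, mul_add, trace_add, mul_smul_comm, trace_smul]
    simp [Complex.mul_re]
  rw [hlin v, hlin 1]
  ring

lemma continuousOn_re_trace_mul_K {S : Set ℝ}
    (X : Matrix (Fin dS × Fin dE) (Fin dS × Fin dE) ℂ)
    {ρ p : ℝ → Matrix (Fin dS × Fin dE) (Fin dS × Fin dE) ℂ}
    (hρ : ContinuousOn ρ S) (hp : ContinuousOn p S) :
    ContinuousOn (fun t => (trace (p t * K X (ρ t))).re) S := by
  unfold K
  fun_prop

end

theorem open_system_initial_bang_general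
    (B C : Matrix (Fin dS) (Fin dS) ℂ)
    (HE : Matrix (Fin dE) (Fin dE) ℂ)
    (HI : Matrix (Fin dS × Fin dE) (Fin dS × Fin dE) ℂ)
    (tf : ℝ) (htf : 0 < tf)
    (ρ p : ℝ → Matrix (Fin dS × Fin dE) (Fin dS × Fin dE) ℂ) (s : ℝ → ℝ)
    (hρcont : ContinuousOn ρ (Set.Icc 0 tf)) (hpcont : ContinuousOn p (Set.Icc 0 tf))
    (hsval : ∀ t ∈ Set.Icc (0 : ℝ) tf, s t ∈ Set.Icc (0 : ℝ) 1)
    -- (a) factorized initial state, stationary environment, interaction-invariant initial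
    -- state, and initial state commuting with the driver
    (ρ0 : Matrix (Fin dS) (Fin dS) ℂ)
    (ρE : Matrix (Fin dE) (Fin dE) ℂ)
    (hinit : ρ 0 = ρ0 ⊗ₖ ρE)
    (hρEHE : ρE * HE = HE * ρE)
    (hHIinit : HI * (ρ0 ⊗ₖ ρE) = (ρ0 ⊗ₖ ρE) * HI)
    (hBρ0 : B * ρ0 = ρ0 * B)
    -- (b) the PMP control Hamiltonian is constant and equal to `λ > 0`
    (lam : ℝ) (hlam : 0 < lam)
    (hconst : ∀ t ∈ Set.Icc (0 : ℝ) tf,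
      (Matrix.trace (p t * K (Htot B C HE HI (s t)) (ρ t))).re = lam)
    -- (c) the maximum condition
    (hmax : ∀ t ∈ Set.Icc (0 : ℝ) tf, ∀ v ∈ Set.Icc (0 : ℝ) 1,
      (Matrix.trace (p t * K (Htot B C HE HI v) (ρ t))).re ≤ lam) :
    ∃ ε > 0, ∀ t ∈ Set.Ico (0 : ℝ) ε, s t = 0 := by
  have hF_one_zero : (trace (p 0 * K (Htot B C HE HI 1) (ρ 0))).re = 0 := by
    have hcomm := commute_Htot_one_kronecker B C HE HI hBρ0 hρEHE.symm hHIinit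
    simp [hinit, K_eq_zero_of_commute hcomm]
  have hF_one_lt : ∀ᶠ t in nhdsWithin 0 (Set.Icc 0 tf),
      (trace (p t * K (Htot B C HE HI 1) (ρ t))).re < lam :=
    (continuousOn_re_trace_mul_K _ hρcont hpcont 0 ⟨le_rfl, htf.le⟩).eventually_lt
      continuousWithinAt_const (hF_one_zero.trans_lt hlam)
  obtain ⟨u, ⟨hu0, hutf⟩, hsub⟩ := ((TFAE_mem_nhdsGE htf _).out 1 3).mp hF_one_lt
  refine ⟨u, hu0, fun t ht => ?_⟩
  have htI : t ∈ Set.Icc 0 tf := ⟨ht.1, ht.2.le.trans hutf⟩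
  refine eq_zero_of_affine_eq_of_le_of_lt (hsval t htI) (hmax t htI 0 ⟨le_rfl, zero_le_one⟩)
    (hsub ht) ?_
  rw [← re_trace_mul_K_Htot]
  exact hconst t htI

/-- **Theorem 6** (initial bang for the open system): if the initial state is factorized,
`[ρ_E, H_E] = 0`, `[H_I, ρ₀⊗ρ_E] = 0` and `[B, ρ₀] = 0`, and the PMP conditions hold with an
active final-time constraint (`λ > 0`), then `s ≡ 0` on an initial interval `[0, ε)`. -/
theorem open_system_initial_bang
    (B C : Matrix (Fin dS) (Fin dS) ℂ) (hB : B.IsHermitian) (hC : C.IsHermitian)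
    (HE : Matrix (Fin dE) (Fin dE) ℂ) (hHE : HE.IsHermitian)
    (HI : Matrix (Fin dS × Fin dE) (Fin dS × Fin dE) ℂ) (hHI : HI.IsHermitian)
    (tf : ℝ) (htf : 0 < tf)
    (ρ p : ℝ → Matrix (Fin dS × Fin dE) (Fin dS × Fin dE) ℂ) (s : ℝ → ℝ)
    (hρcont : ContinuousOn ρ (Set.Icc 0 tf)) (hpcont : ContinuousOn p (Set.Icc 0 tf))
    (hρHerm : ∀ t ∈ Set.Icc (0 : ℝ) tf, (ρ t).IsHermitian)
    (hpHerm : ∀ t ∈ Set.Icc (0 : ℝ) tf, (p t).IsHermitian)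
    (hsval : ∀ t ∈ Set.Icc (0 : ℝ) tf, s t ∈ Set.Icc (0 : ℝ) 1)
    -- (a) factorized initial state, stationary environment, interaction-invariant initial
    -- state, and initial state commuting with the driver
    (ρ0 : Matrix (Fin dS) (Fin dS) ℂ) (hρ0 : ρ0.IsHermitian)
    (ρE : Matrix (Fin dE) (Fin dE) ℂ) (hρE : ρE.IsHermitian)
    (hinit : ρ 0 = ρ0 ⊗ₖ ρE)
    (hρEHE : ρE * HE = HE * ρE)
    (hHIinit : HI * (ρ0 ⊗ₖ ρE) = (ρ0 ⊗ₖ ρE) * HI)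
    (hBρ0 : B * ρ0 = ρ0 * B)
    -- (b) the PMP control Hamiltonian is constant and equal to `λ > 0`
    (lam : ℝ) (hlam : 0 < lam)
    (hconst : ∀ t ∈ Set.Icc (0 : ℝ) tf,
      (Matrix.trace (p t * K (Htot B C HE HI (s t)) (ρ t))).re = lam)
    -- (c) the maximum condition
    (hmax : ∀ t ∈ Set.Icc (0 : ℝ) tf, ∀ v ∈ Set.Icc (0 : ℝ) 1,
      (Matrix.trace (p t * K (Htot B C HE HI v) (ρ t))).re ≤ lam) :
    ∃ ε > 0, ∀ t ∈ Set.Ico (0 : ℝ) ε, s t = 0 :=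
  open_system_initial_bang_general B C HE HI tf htf ρ p s hρcont hpcont hsval ρ0 ρE hinit hρEHE
    hHIinit hBρ0 lam hlam hconst hmax

end Stmt13
end
end

section
/- (Theorem 7: optimal schedule for the adiabatic Redfield master equation ends at s = 1.) Let B, C be Hermitian n×n matrices, H(v) := C + v(B−C), and let S_α (α in a finite index set A) be Hermitian n×n matrices with [S_α, C] = 0 for all α. For any family of n×n matrices W = (W_{αβ})_{α,β ∈ A}, define the Redfield dissipator D_W(ρ) := Σ_{α,β} ([W_{αβ} ρ, S_α] + [S_α, ρ W_{αβ}†]). Let W : [0,1] → (families of n×n matrices indexed by A×A) be an arbitrary function, giving the control-dependent generator ℒ(v) := K_{H(v)} + D_{W(v)} where K_X(ρ) := −i[X,ρ]. Let ρ_f and p_f be Hermitian n×n matrices with p_f = −C, let s_f ∈ [0,1], and suppose there is a real λ > 0 such that Re Tr(p_f ℒ(s_f) ρ_f) = λ and Re Tr(p_f ℒ(v) ρ_f) ≤ λ for all v ∈ [0,1]. Then s_f = 1. -/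
open Matrix

noncomputable section

namespace Stmt14

variable {n : ℕ} {A : Type*} [Fintype A]

/-- The superoperator `K_X(ρ) = −i[X, ρ]`. -/
def K (X ρ : Matrix (Fin n) (Fin n) ℂ) : Matrix (Fin n) (Fin n) ℂ :=
  (-Complex.I) • (X * ρ - ρ * X)

/-- The Hamiltonian `H(v) = C + v(B−C)`. -/
def Ham (B C : Matrix (Fin n) (Fin n) ℂ) (v : ℝ) : Matrix (Fin n) (Fin n) ℂ :=
  C + (v : ℂ) • (B - C)

/-- The Redfield dissipator
`D_W(ρ) = Σ_{α,β} ([W_{αβ} ρ, S_α] + [S_α, ρ W_{αβ}†])`. -/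
def Diss (S : A → Matrix (Fin n) (Fin n) ℂ) (W : A → A → Matrix (Fin n) (Fin n) ℂ)
    (ρ : Matrix (Fin n) (Fin n) ℂ) : Matrix (Fin n) (Fin n) ℂ :=
  ∑ α, ∑ β,
    ((W α β * ρ) * S α - S α * (W α β * ρ) +
      (S α * (ρ * (W α β)ᴴ) - (ρ * (W α β)ᴴ) * S α))

/-- The adiabatic Redfield generator `ℒ(v) = K_{H(v)} + D_{W(v)}`. -/
def Lgen (B C : Matrix (Fin n) (Fin n) ℂ) (S : A → Matrix (Fin n) (Fin n) ℂ)
    (W : ℝ → A → A → Matrix (Fin n) (Fin n) ℂ) (v : ℝ)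
    (ρ : Matrix (Fin n) (Fin n) ℂ) : Matrix (Fin n) (Fin n) ℂ :=
  K (Ham B C v) ρ + Diss S (W v) ρ

lemma key (C M X : Matrix (Fin n) (Fin n) ℂ) (h : M * C = C * M) :
    Matrix.trace (C * (X * M)) = Matrix.trace (C * (M * X)) := by
  rw [← mul_assoc, trace_mul_comm, ← mul_assoc, h, mul_assoc]

lemma diss_trace (C : Matrix (Fin n) (Fin n) ℂ) (S : A → Matrix (Fin n) (Fin n) ℂ)
    (hSC : ∀ α, S α * C = C * S α) (W : A → A → Matrix (Fin n) (Fin n) ℂ)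
    (ρ : Matrix (Fin n) (Fin n) ℂ) :
    Matrix.trace (C * Diss S W ρ) = 0 := by
  unfold Diss
  simp only [Matrix.mul_sum, trace_sum]
  apply Finset.sum_eq_zero; intro α _
  apply Finset.sum_eq_zero; intro β _
  simp only [Matrix.mul_add, Matrix.mul_sub, trace_add, trace_sub]
  rw [key C (S α) (W α β * ρ) (hSC α), key C (S α) (ρ * (W α β)ᴴ) (hSC α)]
  ring

lemma trace_form (B C : Matrix (Fin n) (Fin n) ℂ) (S : A → Matrix (Fin n) (Fin n) ℂ)
    (hSC : ∀ α, S α * C = C * S α) (W : ℝ → A → A → Matrix (Fin n) (Fin n) ℂ)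
    (ρ : Matrix (Fin n) (Fin n) ℂ) (v : ℝ) :
    Matrix.trace ((-C) * Lgen B C S W v ρ) =
      (v : ℂ) * (Complex.I * (Matrix.trace (C * (B * ρ)) - Matrix.trace (C * (ρ * B)))) := by
  have h1 : Matrix.trace (C * (ρ * C)) = Matrix.trace (C * (C * ρ)) := key C C ρ rfl
  unfold Lgen
  rw [Matrix.mul_add, trace_add]
  have hd : Matrix.trace ((-C) * Diss S (W v) ρ) = 0 := by
    rw [Matrix.neg_mul, trace_neg, diss_trace C S hSC, neg_zero]
  rw [hd, add_zero]
  unfold K Ham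
  simp only [Matrix.neg_mul, Matrix.mul_smul, trace_neg, trace_smul, Matrix.mul_sub,
    trace_sub, Matrix.add_mul, Matrix.mul_add, Matrix.sub_mul, Matrix.smul_mul, smul_sub,
    trace_add, smul_eq_mul]
  linear_combination (v : ℂ) * Complex.I * h1 - Complex.I * h1 + Complex.I * h1 - Complex.I * h1

/-- **Theorem 7**: for the adiabatic Redfield master equation with `[S_α, C] = 0` for all
`α` and an active final-time constraint (`λ > 0`), the PMP conditions at the final time
force the optimal control to end at `s(tf) = 1`. -/
theorem redfield_final_control_is_one
    (B C : Matrix (Fin n) (Fin n) ℂ) (hB : B.IsHermitian) (hC : C.IsHermitian)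
    (S : A → Matrix (Fin n) (Fin n) ℂ) (hS : ∀ α, (S α).IsHermitian)
    (hSC : ∀ α, S α * C = C * S α)
    (W : ℝ → A → A → Matrix (Fin n) (Fin n) ℂ)
    (ρf pf : Matrix (Fin n) (Fin n) ℂ) (hρf : ρf.IsHermitian) (hpf : pf.IsHermitian)
    (hpfC : pf = -C)
    (sf : ℝ) (hsf : sf ∈ Set.Icc (0 : ℝ) 1)
    (lam : ℝ) (hlam : 0 < lam)
    (hconst : (Matrix.trace (pf * Lgen B C S W sf ρf)).re = lam)
    (hmax : ∀ v ∈ Set.Icc (0 : ℝ) 1, (Matrix.trace (pf * Lgen B C S W v ρf)).re ≤ lam) :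
    sf = 1 := by
  set a : ℂ := Complex.I * (Matrix.trace (C * (B * ρf)) - Matrix.trace (C * (ρf * B))) with ha
  have hform : ∀ v : ℝ, (Matrix.trace (pf * Lgen B C S W v ρf)).re = v * a.re := by
    intro v
    rw [hpfC, trace_form B C S hSC W ρf v, ← ha]
    simp [Complex.mul_re]
  rw [hform sf] at hconst
  have h1 := hmax 1 (by norm_num)
  rw [hform 1, one_mul] at h1
  have h0 : 0 ≤ sf := hsf.1
  have h2 : sf ≤ 1 := hsf.2
  nlinarith [hconst, h1, hlam, h0, h2]

end Stmt14
end
end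

section
/- (Conditions on singular arcs.) Let B, C be Hermitian n×n matrices, let s : I → ℝ be a function on an open interval I, set H(t) := s(t)B + (1−s(t))C and D := [C,B], and let S : I → (Hermitian n×n matrices) be differentiable with Ṡ(t) = −i[H(t), S(t)] for all t ∈ I. Suppose Re Tr(B S(t)) = Re Tr(C S(t)) for all t ∈ I (a singular arc). Then for every t ∈ I: (a) Re Tr(D S(t)) = 0; and (b) (1 − s(t))·Re Tr([C,D] S(t)) + s(t)·Re Tr([B,D] S(t)) = 0. -/
/-!
Since `B - C` and `S(t)` are Hermitian, `Tr((B - C) S)` is real, so on a singular arc it vanishes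
as a complex number. Along the flow `Ṡ = −i[H, S]` one has `d/dt Tr(X S) = −i Tr([X, H] S)`, and
`[B - C, H(t)] = [B, C] = −D` for every value of the control; differentiating once gives
`Tr(D S) ≡ 0`, which contains (a). Differentiating again gives `Tr([D, H(t)] S) = 0`, and expanding
`H(t) = s B + (1 - s) C` yields (b).
-/

open Matrix

noncomputable section

attribute [local instance] Matrix.normedAddCommGroup Matrix.normedSpace

namespace Stmt16

variable {n : ℕ}

/-- The superoperator `K_X(ρ) = −i[X, ρ]`. -/
def K (X ρ : Matrix (Fin n) (Fin n) ℂ) : Matrix (Fin n) (Fin n) ℂ :=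
  (-Complex.I) • (X * ρ - ρ * X)

/-- The control Hamiltonian `H(v) = vB + (1−v)C`. -/
def Ham (B C : Matrix (Fin n) (Fin n) ℂ) (v : ℝ) : Matrix (Fin n) (Fin n) ℂ :=
  (v : ℂ) • B + (1 - (v : ℂ)) • C

attribute [local instance] LieRing.ofAssociativeRing

theorem _root_.Matrix.IsHermitian.isSelfAdjoint_trace_mul {m R : Type*} [Fintype m]
    [CommRing R] [StarRing R] {X ρ : Matrix m m R} (hX : X.IsHermitian) (hρ : ρ.IsHermitian) :
    IsSelfAdjoint (trace (X * ρ)) := by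
  rw [IsSelfAdjoint, ← trace_conjTranspose, conjTranspose_mul, hX.eq, hρ.eq, trace_mul_comm]

theorem _root_.Matrix.trace_mul_lie {m R : Type*} [Fintype m] [CommRing R]
    (X H ρ : Matrix m m R) : trace (X * ⁅H, ρ⁆) = trace (⁅X, H⁆ * ρ) := by
  rw [Ring.lie_def, Ring.lie_def, Matrix.mul_sub, Matrix.sub_mul, ← Matrix.mul_assoc,
    ← Matrix.mul_assoc, trace_sub, trace_sub, trace_mul_cycle X ρ H]

theorem _root_.HasDerivAt.eq_zero_of_eqOn_zero {𝕜 F : Type*} [NontriviallyNormedField 𝕜]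
    [NormedAddCommGroup F] [NormedSpace 𝕜 F] {f : 𝕜 → F} {f' : F} {U : Set 𝕜} {t : 𝕜}
    (hf : HasDerivAt f f' t) (hU : IsOpen U) (ht : t ∈ U) (h0 : Set.EqOn f 0 U) : f' = 0 := by
  rw [← hf.deriv, Filter.EventuallyEq.deriv_eq (Filter.eventuallyEq_of_mem (hU.mem_nhds ht) h0)]
  exact deriv_const t 0

theorem hasDerivAt_trace_mul {m : Type*} [Fintype m] (X : Matrix m m ℂ)
    {S : ℝ → Matrix m m ℂ} {S' : Matrix m m ℂ} {t : ℝ} (h : HasDerivAt S S' t) :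
    HasDerivAt (fun u => trace (X * S u)) (trace (X * S')) t :=
  let traceMulLeft : Matrix m m ℂ →L[ℝ] ℂ := LinearMap.toContinuousLinearMap
    (((traceLinearMap m ℂ ℂ).comp (LinearMap.mulLeft ℂ X)).restrictScalars ℝ)
  traceMulLeft.hasFDerivAt.comp_hasDerivAt t h

theorem K_eq_smul_lie (X ρ : Matrix (Fin n) (Fin n) ℂ) : K X ρ = (-Complex.I) • ⁅X, ρ⁆ := by
  rw [K, Ring.lie_def]

theorem lie_Ham (X B C : Matrix (Fin n) (Fin n) ℂ) (v : ℝ) :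
    ⁅X, Ham B C v⁆ = (v : ℂ) • ⁅X, B⁆ + (1 - (v : ℂ)) • ⁅X, C⁆ := by
  simp only [Ham, Ring.lie_def, Matrix.mul_add, Matrix.add_mul, Matrix.mul_smul, Matrix.smul_mul]
  module

theorem lie_sub_Ham (B C : Matrix (Fin n) (Fin n) ℂ) (v : ℝ) : ⁅B - C, Ham B C v⁆ = -⁅C, B⁆ := by
  rw [sub_lie, lie_Ham, lie_Ham, lie_self, lie_self, ← lie_skew C B]
  module

theorem trace_lie_mul_eq_zero_of_eqOn {U : Set ℝ} (hU : IsOpen U)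
    {H S : ℝ → Matrix (Fin n) (Fin n) ℂ} (hS : ∀ t ∈ U, HasDerivAt S (K (H t) (S t)) t)
    {X : Matrix (Fin n) (Fin n) ℂ} (hX : Set.EqOn (fun u => trace (X * S u)) 0 U)
    {t : ℝ} (ht : t ∈ U) : trace (⁅X, H t⁆ * S t) = 0 := by
  have hderiv := (hasDerivAt_trace_mul X (hS t ht)).eq_zero_of_eqOn_zero hU ht hX
  rw [K_eq_smul_lie, Matrix.mul_smul, trace_smul, trace_mul_lie, smul_eq_mul] at hderiv
  exact (mul_eq_zero.mp hderiv).resolve_left (neg_ne_zero.mpr Complex.I_ne_zero)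

/-- **Conditions on singular arcs**: if the switching operator `S` satisfies
`Ṡ = −i[H(t), S]` on an open interval and `Re Tr(B S) ≡ Re Tr(C S)` there (a singular arc),
then with `D := [C,B]` one has `Re Tr(D S) ≡ 0` and
`(1−s)·Re Tr([C,D] S) + s·Re Tr([B,D] S) ≡ 0`. -/
theorem singular_arc_conditions
    (B C : Matrix (Fin n) (Fin n) ℂ) (hB : B.IsHermitian) (hC : C.IsHermitian)
    (a b : ℝ) (s : ℝ → ℝ)
    (S : ℝ → Matrix (Fin n) (Fin n) ℂ)
    (hSHerm : ∀ t ∈ Set.Ioo a b, (S t).IsHermitian)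
    (hSode : ∀ t ∈ Set.Ioo a b, HasDerivAt S (K (Ham B C (s t)) (S t)) t)
    (hsing : ∀ t ∈ Set.Ioo a b,
      (Matrix.trace (B * S t)).re = (Matrix.trace (C * S t)).re) :
    ∀ t ∈ Set.Ioo a b,
      (Matrix.trace ((C * B - B * C) * S t)).re = 0 ∧
      (1 - s t) * (Matrix.trace ((C * (C * B - B * C) - (C * B - B * C) * C) * S t)).re +
        s t * (Matrix.trace ((B * (C * B - B * C) - (C * B - B * C) * B) * S t)).re = 0 := by
  have hswitch : Set.EqOn (fun u => trace ((B - C) * S u)) 0 (Set.Ioo a b) := fun u hu =>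
    Complex.ext (by simp [Matrix.sub_mul, hsing u hu])
      (Complex.conj_eq_iff_im.mp ((hB.sub hC).isSelfAdjoint_trace_mul (hSHerm u hu)))
  have hD : Set.EqOn (fun u => trace (⁅C, B⁆ * S u)) 0 (Set.Ioo a b) := fun u hu => by
    simpa only [lie_sub_Ham, Matrix.neg_mul, trace_neg, neg_eq_zero, Pi.zero_apply] using
      trace_lie_mul_eq_zero_of_eqOn isOpen_Ioo hSode hswitch hu
  intro t ht
  simp only [← Ring.lie_def]
  refine ⟨by simp [hD ht], ?_⟩
  have h2 := congrArg Complex.re (trace_lie_mul_eq_zero_of_eqOn isOpen_Ioo hSode hD ht)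
  rw [lie_Ham, ← lie_skew ⁅C, B⁆ B, ← lie_skew ⁅C, B⁆ C] at h2
  simp only [Matrix.add_mul, Matrix.smul_mul, Matrix.neg_mul, trace_add, trace_smul, trace_neg,
    smul_eq_mul, mul_neg, Complex.add_re, Complex.neg_re, Complex.mul_re, Complex.ofReal_re,
    Complex.ofReal_im, zero_mul, sub_zero, Complex.sub_re, Complex.one_re, Complex.sub_im,
    Complex.one_im, sub_self, Complex.zero_re] at h2
  linarith

end Stmt16
end
end

section
/- (Lemma 1: recursion for the switching vector of the spin-1/2 problem.) Let R_Z(t) and R_X(t) be the 3×3 rotation matrices R_Z(t) = [[cos t, −sin t, 0],[sin t, cos t, 0],[0,0,1]] and R_X(t) = [[1,0,0],[0, cos t, −sin t],[0, sin t, cos t]]. Let r₀y, r₀z ∈ ℝ, let N ≥ 1, let τ₁, …, τ_N > 0, and define r_0 := (0, r₀y, r₀z) and recursively r_k := R_Z(τ_k) r_{k−1} if k is odd and r_k := R_X(τ_k) r_{k−1} if k is even. Define Δ₀ := 0 and Δ_k := τ_k − Δ_{k−1}. Assume the switching conditions: for every n with 1 ≤ n ≤ N−1, the first and third components of r_n both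 equal r₀z. Then for every n with 1 ≤ n ≤ N−1: (−1)ⁿ sin(Δ_n) · r₀y = r₀z and r_n = (r₀z, cos(Δ_n)·r₀y, r₀z). -/
open Matrix

noncomputable section

namespace Stmt18

/-- Rotation about the z-axis (the generator `K_C` in the spin-1/2 problem). -/
def RZ (t : ℝ) : Matrix (Fin 3) (Fin 3) ℝ :=
  !![Real.cos t, -Real.sin t, 0; Real.sin t, Real.cos t, 0; 0, 0, 1]

/-- Rotation about the x-axis (the generator `K_B` in the spin-1/2 problem). -/
def RX (t : ℝ) : Matrix (Fin 3) (Fin 3) ℝ :=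
  !![1, 0, 0; 0, Real.cos t, -Real.sin t; 0, Real.sin t, Real.cos t]

/-- **Lemma 1** (recursion for the switching vector of the spin-1/2 problem): if the
switching vector starts at `(0, r₀y, r₀z)`, alternately rotates by `R_Z(τ_k)` (`k` odd) and
`R_X(τ_k)` (`k` even), and at each switching time `1 ≤ n ≤ N−1` its first and third
components equal `r₀z`, then `(−1)ⁿ sin(Δ_n) r₀y = r₀z` and
`r_n = (r₀z, cos(Δ_n) r₀y, r₀z)`, where `Δ₀ = 0` and `Δ_k = τ_k − Δ_{k−1}`. -/
theorem switching_vector_recursion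
    (r0y r0z : ℝ) (N : ℕ) (hN : 1 ≤ N)
    (τ : ℕ → ℝ) (hτ : ∀ k, 1 ≤ k → k ≤ N → 0 < τ k)
    (r : ℕ → Fin 3 → ℝ)
    (hr0 : r 0 = ![0, r0y, r0z])
    (hrec : ∀ k, 1 ≤ k → k ≤ N →
      r k = (if Odd k then RZ (τ k) else RX (τ k)).mulVec (r (k - 1)))
    (Δ : ℕ → ℝ) (hΔ0 : Δ 0 = 0) (hΔ : ∀ k, 1 ≤ k → Δ k = τ k - Δ (k - 1))
    (hswitch : ∀ n, 1 ≤ n → n ≤ N - 1 → r n 0 = r0z ∧ r n 2 = r0z) :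
    ∀ n, 1 ≤ n → n ≤ N - 1 →
      (-1 : ℝ) ^ n * Real.sin (Δ n) * r0y = r0z ∧
      r n = ![r0z, Real.cos (Δ n) * r0y, r0z] := by
  intro n
  induction n with
  | zero => intro h; omega
  | succ m ih =>
    intro hn hnN
    rcases Nat.lt_or_ge 1 (m + 1) with h1 | h1
    · -- m ≥ 1
      have hm1 : 1 ≤ m := by omega
      have hmN : m ≤ N - 1 := by omega
      obtain ⟨ihs, ihr⟩ := ih hm1 hmN
      have hr' := hrec (m + 1) (by omega) (by omega)
      simp only [Nat.add_sub_cancel] at hr'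
      have hsw := hswitch (m + 1) (by omega) hnN
      have hΔ' : Δ (m + 1) = τ (m + 1) - Δ m := by
        rw [hΔ (m + 1) (by omega)]; simp
      rcases Nat.even_or_odd m with he | ho
      · -- m even, m+1 odd: apply RZ
        have ihs' : Real.sin (Δ m) * r0y = r0z := by
          rw [Even.neg_one_pow he, one_mul] at ihs; exact ihs
        rw [if_pos (Even.add_one he), ihr] at hr'
        have h0 : r (m + 1) 0 = -(Real.sin (Δ (m + 1)) * r0y) := by
          rw [hr']; simp [RZ, Matrix.mulVec, dotProduct, Fin.sum_univ_three]
          rw [hΔ', Real.sin_sub]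
          linear_combination (-Real.cos (τ (m + 1))) * ihs'
        have h1 : r (m + 1) 1 = Real.cos (Δ (m + 1)) * r0y := by
          rw [hr']; simp [RZ, Matrix.mulVec, dotProduct, Fin.sum_univ_three]
          rw [hΔ', Real.cos_sub]
          linear_combination (-Real.sin (τ (m + 1))) * ihs'
        have h2 : r (m + 1) 2 = r0z := by
          rw [hr']; simp [RZ, Matrix.mulVec, dotProduct, Fin.sum_univ_three]
        constructor
        · rw [Odd.neg_one_pow (Even.add_one he)]
          have := hsw.1
          rw [h0] at this
          linarith
        · funext i
          fin_cases i
          · simpa using hsw.1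
          · simpa using h1
          · simpa using h2
      · -- m odd, m+1 even: apply RX
        have ihs' : -(Real.sin (Δ m) * r0y) = r0z := by
          rw [Odd.neg_one_pow ho] at ihs; linarith
        have hnotodd : ¬ Odd (m + 1) := by
          simp [Nat.odd_add_one, Nat.not_even_iff_odd, ho]
        rw [if_neg hnotodd, ihr] at hr'
        have h0 : r (m + 1) 0 = r0z := by
          rw [hr']; simp [RX, Matrix.mulVec, dotProduct, Fin.sum_univ_three]
        have h1 : r (m + 1) 1 = Real.cos (Δ (m + 1)) * r0y := by
          rw [hr']; simp [RX, Matrix.mulVec, dotProduct, Fin.sum_univ_three]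
          rw [hΔ', Real.cos_sub]
          linear_combination (Real.sin (τ (m + 1))) * ihs'
        have h2 : r (m + 1) 2 = Real.sin (Δ (m + 1)) * r0y := by
          rw [hr']; simp [RX, Matrix.mulVec, dotProduct, Fin.sum_univ_three]
          rw [hΔ', Real.sin_sub]
          linear_combination (-Real.cos (τ (m + 1))) * ihs'
        constructor
        · rw [Even.neg_one_pow (Odd.add_one ho), one_mul]
          have := hsw.2
          rw [h2] at this
          linarith
        · funext i
          fin_cases i
          · simpa using h0
          · simpa using h1
          · simpa using hsw.2
    · -- m + 1 = 1
      have hm : m = 0 := by omega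
      subst hm
      have hr1 := hrec 1 le_rfl (by omega)
      rw [if_pos (by norm_num : Odd 1), hr0] at hr1
      have hsw := hswitch 1 le_rfl hnN
      have hΔ1 : Δ 1 = τ 1 := by rw [hΔ 1 le_rfl]; simp [hΔ0]
      have h0 : r 1 0 = -(Real.sin (τ 1) * r0y) := by
        rw [hr1]; simp [RZ, Matrix.mulVec, dotProduct, Fin.sum_univ_three]
      have h1 : r 1 1 = Real.cos (τ 1) * r0y := by
        rw [hr1]; simp [RZ, Matrix.mulVec, dotProduct, Fin.sum_univ_three]
      have h2 : r 1 2 = r0z := by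
        rw [hr1]; simp [RZ, Matrix.mulVec, dotProduct, Fin.sum_univ_three]
      constructor
      · rw [hΔ1, pow_one]
        have := hsw.1
        rw [h0] at this
        linarith
      · funext i
        fin_cases i
        · simpa using hsw.1
        · rw [hΔ1]; simpa using h1
        · simpa using h2

end Stmt18
end
end

section
/- (Lemma 2: interval lengths in a multi-switch schedule.) In the setting of Lemma 1 (rotations R_Z, R_X, times τ₁,…,τ_N > 0, vectors r_k, quantities Δ₀ = 0, Δ_k = τ_k − Δ_{k−1}, and switching conditions giving (−1)ⁿ sin(Δ_n) r₀y = r₀z for 1 ≤ n ≤ N−1), assume additionally that r₀y ≠ 0, that τ₁ ∈ (π/2, π), and that τ_k ∈ (0, π) for every k with 2 ≤ k ≤ N−1. Then for every n with 1 ≤ n ≤ N−1: Δ_n = τ₁ if n is odd and Δ_n = τ₁ − π if n is even; equivalently, setting μ := τ₁ − π = arcsin(r₀z/r₀y) < 0, one has Δ_n = π + μ for n odd and Δ_n = μ for n even, and hence τ_n = 2τ₁ − π for every n with 2 ≤ n ≤ N−1. -/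
open Matrix

noncomputable section

namespace Stmt19

/-- Rotation about the z-axis (the generator `K_C` in the spin-1/2 problem). -/
def RZ (t : ℝ) : Matrix (Fin 3) (Fin 3) ℝ :=
  !![Real.cos t, -Real.sin t, 0; Real.sin t, Real.cos t, 0; 0, 0, 1]

/-- Rotation about the x-axis (the generator `K_B` in the spin-1/2 problem). -/
def RX (t : ℝ) : Matrix (Fin 3) (Fin 3) ℝ :=
  !![1, 0, 0; 0, Real.cos t, -Real.sin t; 0, Real.sin t, Real.cos t]

open Real

/-! Under the switching conditions every `r n` has the form `(r₀z, cos Δₙ · r₀y, r₀z)` with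
`(-1)ⁿ sin Δₙ · r₀y = r₀z`: written in polar form, the next rotation just shifts the angle `Δₙ`
to `τₙ₊₁ - Δₙ = Δₙ₊₁`. Comparing with `n = 1` gives `(-1)ⁿ sin Δₙ = -sin τ₁`. Inductively,
`Δₙ` (plus `π` for even `n`) added to `τ₁` equals `τₙ + π ∈ (π, 2π)`, and on such a range
`sin x = sin τ₁` forces `x = τ₁` because `sin x - sin τ₁ = 2 sin ((x - τ₁)/2) cos ((x + τ₁)/2)`. -/

theorem RZ_mulVec_sin_cos (t d y w : ℝ) :
    RZ t *ᵥ ![sin d * y, cos d * y, w] = ![-(sin (t - d) * y), cos (t - d) * y, w] := by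
  ext i
  fin_cases i <;> simp [RZ, mulVec, dotProduct, Fin.sum_univ_three, sin_sub, cos_sub] <;> ring

theorem RX_mulVec_cos_sin (t d y w : ℝ) :
    RX t *ᵥ ![w, cos d * y, -(sin d * y)] = ![w, cos (t - d) * y, sin (t - d) * y] := by
  ext i
  fin_cases i <;> simp [RX, mulVec, dotProduct, Fin.sum_univ_three, sin_sub, cos_sub] <;> ring

def scheduleRotation (k : ℕ) (t : ℝ) : Matrix (Fin 3) (Fin 3) ℝ :=
  if Odd k then RZ t else RX t

theorem switching_step {n : ℕ} {t d y z : ℝ} (hd : (-1) ^ n * sin d * y = z)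
    (h0 : (scheduleRotation (n + 1) t *ᵥ ![z, cos d * y, z]) 0 = z)
    (h2 : (scheduleRotation (n + 1) t *ᵥ ![z, cos d * y, z]) 2 = z) :
    (-1) ^ (n + 1) * sin (t - d) * y = z ∧
      scheduleRotation (n + 1) t *ᵥ ![z, cos d * y, z] = ![z, cos (t - d) * y, z] := by
  rcases Nat.even_or_odd n with hn | hn
  · rw [hn.neg_one_pow, one_mul] at hd
    have hv : scheduleRotation (n + 1) t *ᵥ ![z, cos d * y, z] =
        ![-(sin (t - d) * y), cos (t - d) * y, z] := by
      rw [scheduleRotation, if_pos hn.add_one, ← RZ_mulVec_sin_cos, hd]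
    rw [hv] at h0 ⊢
    simp only [cons_val_zero] at h0
    rw [(hn.add_one).neg_one_pow, h0]
    exact ⟨by linarith, rfl⟩
  · rw [hn.neg_one_pow, neg_one_mul, neg_mul] at hd
    have hv : scheduleRotation (n + 1) t *ᵥ ![z, cos d * y, z] =
        ![z, cos (t - d) * y, sin (t - d) * y] := by
      rw [scheduleRotation, if_neg (Nat.not_odd_iff_even.mpr hn.add_one), ← RX_mulVec_cos_sin,
        hd]
    rw [hv] at h2 ⊢
    simp only [cons_val_two, tail_cons, head_cons] at h2
    rw [(hn.add_one).neg_one_pow, h2]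
    exact ⟨by linarith, rfl⟩

theorem switching_invariant {N : ℕ} {τ Δ : ℕ → ℝ} {r : ℕ → Fin 3 → ℝ} {y z : ℝ}
    (hr0 : r 0 = ![0, y, z])
    (hrec : ∀ k, 1 ≤ k → k ≤ N → r k = scheduleRotation k (τ k) *ᵥ r (k - 1))
    (hΔ0 : Δ 0 = 0) (hΔ : ∀ k, 1 ≤ k → Δ k = τ k - Δ (k - 1))
    (hswitch : ∀ n, 1 ≤ n → n ≤ N - 1 → r n 0 = z ∧ r n 2 = z) :
    ∀ n, 1 ≤ n → n ≤ N - 1 → (-1) ^ n * sin (Δ n) * y = z ∧ r n = ![z, cos (Δ n) * y, z] := by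
  intro n hn
  induction n, hn using Nat.le_induction with
  | base =>
    intro hN
    have hΔ1 : Δ 1 = τ 1 := by rw [hΔ 1 le_rfl, Nat.sub_self, hΔ0, sub_zero]
    have hr1 : r 1 = ![-(sin (Δ 1) * y), cos (Δ 1) * y, z] := by
      rw [hrec 1 le_rfl (by omega), Nat.sub_self, hr0, hΔ1, ← sub_zero (τ 1),
        ← RZ_mulVec_sin_cos]
      simp [scheduleRotation]
    have h0 := (hswitch 1 le_rfl hN).1
    rw [hr1] at h0 ⊢
    simp only [cons_val_zero] at h0
    exact ⟨by rw [← h0]; ring, by rw [h0]⟩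
  | succ n hn ih =>
    intro hN
    obtain ⟨hd, hr⟩ := ih (by omega)
    have hstep : r (n + 1) = scheduleRotation (n + 1) (τ (n + 1)) *ᵥ ![z, cos (Δ n) * y, z] := by
      rw [hrec (n + 1) (by omega) (by omega), Nat.add_sub_cancel, hr]
    obtain ⟨h0, h2⟩ := hswitch (n + 1) (by omega) hN
    rw [hstep] at h0 h2 ⊢
    rw [hΔ (n + 1) (by omega), Nat.add_sub_cancel]
    exact switching_step hd h0 h2

theorem eq_of_sin_eq_of_add_mem_Ioo {x a : ℝ} (hadd : x + a ∈ Set.Ioo π (3 * π))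
    (hsub : x - a ∈ Set.Ioo (-(2 * π)) (2 * π)) (h : sin x = sin a) : x = a := by
  have hcos : cos ((x + a) / 2) ≠ 0 :=
    (cos_neg_of_pi_div_two_lt_of_lt (by linarith [hadd.1]) (by linarith [hadd.2])).ne
  have hsin : sin ((x - a) / 2) = 0 := by
    have := sin_sub_sin x a
    rw [h, sub_self] at this
    simpa [hcos] using this.symm
  have := (sin_eq_zero_iff_of_lt_of_lt (by linarith [hsub.1]) (by linarith [hsub.2])).mp hsin
  linarith

theorem interval_lengths {N : ℕ} {τ Δ : ℕ → ℝ} (hτ1 : τ 1 ∈ Set.Ioo (π / 2) π)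
    (hτk : ∀ k, 2 ≤ k → k ≤ N - 1 → τ k ∈ Set.Ioo 0 π)
    (hΔ0 : Δ 0 = 0) (hΔ : ∀ k, 1 ≤ k → Δ k = τ k - Δ (k - 1))
    (hsin : ∀ n, 1 ≤ n → n ≤ N - 1 → (-1) ^ n * sin (Δ n) = -sin (τ 1)) :
    ∀ n, 1 ≤ n → n ≤ N - 1 → (Odd n → Δ n = τ 1) ∧ (Even n → Δ n = τ 1 - π) := by
  obtain ⟨hτ1lo, hτ1hi⟩ := hτ1
  intro n hn
  induction n, hn using Nat.le_induction with
  | base =>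
    intro _
    exact ⟨fun _ => by rw [hΔ 1 le_rfl, Nat.sub_self, hΔ0, sub_zero],
      fun h => absurd h Nat.not_even_one⟩
  | succ n hn ih =>
    intro hN
    obtain ⟨hτlo, hτhi⟩ := hτk (n + 1) (by omega) hN
    have hs := hsin (n + 1) (by omega) hN
    have hstep : Δ (n + 1) = τ (n + 1) - Δ n := by rw [hΔ (n + 1) (by omega), Nat.add_sub_cancel]
    rcases Nat.even_or_odd n with he | ho
    · have hΔn := (ih (by omega)).2 he
      rw [he.add_one.neg_one_pow, neg_one_mul, neg_inj] at hs
      have hodd : Δ (n + 1) = τ 1 := eq_of_sin_eq_of_add_mem_Ioo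
        ⟨by linarith, by linarith⟩ ⟨by linarith, by linarith⟩ hs
      exact ⟨fun _ => hodd, fun h => absurd h (Nat.not_even_iff_odd.mpr he.add_one)⟩
    · have hΔn := (ih (by omega)).1 ho
      rw [ho.add_one.neg_one_pow, one_mul] at hs
      have heven : Δ (n + 1) + π = τ 1 := eq_of_sin_eq_of_add_mem_Ioo
        ⟨by linarith, by linarith⟩ ⟨by linarith, by linarith⟩ (by rw [sin_add_pi, hs, neg_neg])
      exact ⟨fun h => absurd h (Nat.not_odd_iff_even.mpr ho.add_one), fun _ => by linarith⟩

theorem multi_switch_interval_lengths_general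
    (r0y r0z : ℝ) (hr0y : r0y ≠ 0) (N : ℕ)
    (τ : ℕ → ℝ)
    (hτ1 : τ 1 ∈ Set.Ioo (Real.pi / 2) Real.pi)
    (hτk : ∀ k, 2 ≤ k → k ≤ N - 1 → τ k ∈ Set.Ioo 0 Real.pi)
    (r : ℕ → Fin 3 → ℝ)
    (hr0 : r 0 = ![0, r0y, r0z])
    (hrec : ∀ k, 1 ≤ k → k ≤ N →
      r k = (if Odd k then RZ (τ k) else RX (τ k)).mulVec (r (k - 1)))
    (Δ : ℕ → ℝ) (hΔ0 : Δ 0 = 0) (hΔ : ∀ k, 1 ≤ k → Δ k = τ k - Δ (k - 1))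
    (hswitch : ∀ n, 1 ≤ n → n ≤ N - 1 → r n 0 = r0z ∧ r n 2 = r0z) :
    (∀ n, 1 ≤ n → n ≤ N - 1 →
      (Odd n → Δ n = τ 1) ∧ (Even n → Δ n = τ 1 - Real.pi)) ∧
    τ 1 - Real.pi < 0 ∧
    (2 ≤ N → τ 1 - Real.pi = Real.arcsin (r0z / r0y)) ∧
    (∀ n, 2 ≤ n → n ≤ N - 1 → τ n = 2 * τ 1 - Real.pi) := by
  have hinv := switching_invariant hr0 hrec hΔ0 hΔ hswitch
  have hΔ1 : Δ 1 = τ 1 := by rw [hΔ 1 le_rfl, Nat.sub_self, hΔ0, sub_zero]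
  have hz : 2 ≤ N → r0z = -sin (τ 1) * r0y := fun hN ↦ by
    rw [← (hinv 1 le_rfl (by omega)).1, hΔ1, pow_one, neg_one_mul]
  have hΔn := interval_lengths hτ1 hτk hΔ0 hΔ fun n hn hN ↦
    mul_right_cancel₀ hr0y ((hinv n hn hN).1.trans (hz (by omega)))
  refine ⟨hΔn, by linarith [hτ1.2], fun hN ↦ ?_, fun n hn hN ↦ ?_⟩
  · rw [hz hN, neg_mul, neg_div, mul_div_cancel_right₀ _ hr0y, ← sin_sub_pi,
      arcsin_sin (by linarith [hτ1.1]) (by linarith [hτ1.2, pi_pos])]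
  · obtain ⟨m, rfl⟩ : ∃ m, n = m + 1 := ⟨n - 1, by omega⟩
    have hstep : Δ (m + 1) = τ (m + 1) - Δ m := by rw [hΔ (m + 1) (by omega), Nat.add_sub_cancel]
    rcases Nat.even_or_odd m with he | ho
    · linarith [(hΔn m (by omega) (by omega)).2 he, (hΔn (m + 1) (by omega) hN).1 he.add_one]
    · linarith [(hΔn m (by omega) (by omega)).1 ho, (hΔn (m + 1) (by omega) hN).2 ho.add_one]

/-- **Lemma 2** (interval lengths in a multi-switch schedule): in the setting of Lemma 1,
if `r₀y ≠ 0`, `τ₁ ∈ (π/2, π)` and `τ_k ∈ (0, π)` for `2 ≤ k ≤ N−1`, then `Δ_n = τ₁` for `n`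
odd and `Δ_n = τ₁ − π` for `n` even (`1 ≤ n ≤ N−1`); equivalently, with
`μ := τ₁ − π = arcsin(r₀z/r₀y) < 0`, `Δ_n = π + μ` for `n` odd and `Δ_n = μ` for `n` even,
and hence `τ_n = 2τ₁ − π` for all `2 ≤ n ≤ N−1`. -/
theorem multi_switch_interval_lengths
    (r0y r0z : ℝ) (hr0y : r0y ≠ 0) (N : ℕ) (hN : 1 ≤ N)
    (τ : ℕ → ℝ) (hτ : ∀ k, 1 ≤ k → k ≤ N → 0 < τ k)
    (hτ1 : τ 1 ∈ Set.Ioo (Real.pi / 2) Real.pi)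
    (hτk : ∀ k, 2 ≤ k → k ≤ N - 1 → τ k ∈ Set.Ioo 0 Real.pi)
    (r : ℕ → Fin 3 → ℝ)
    (hr0 : r 0 = ![0, r0y, r0z])
    (hrec : ∀ k, 1 ≤ k → k ≤ N →
      r k = (if Odd k then RZ (τ k) else RX (τ k)).mulVec (r (k - 1)))
    (Δ : ℕ → ℝ) (hΔ0 : Δ 0 = 0) (hΔ : ∀ k, 1 ≤ k → Δ k = τ k - Δ (k - 1))
    (hswitch : ∀ n, 1 ≤ n → n ≤ N - 1 → r n 0 = r0z ∧ r n 2 = r0z) :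
    (∀ n, 1 ≤ n → n ≤ N - 1 →
      (Odd n → Δ n = τ 1) ∧ (Even n → Δ n = τ 1 - Real.pi)) ∧
    τ 1 - Real.pi < 0 ∧
    (2 ≤ N → τ 1 - Real.pi = Real.arcsin (r0z / r0y)) ∧
    (∀ n, 2 ≤ n → n ≤ N - 1 → τ n = 2 * τ 1 - Real.pi) :=
  multi_switch_interval_lengths_general r0y r0z hr0y N τ hτ1 hτk r hr0 hrec Δ hΔ0 hΔ hswitch

end Stmt19
end
end
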